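/- arXiv:1606.07927 — 5 statements merged into one kernel-verified Lean document; each statement's English description precedes it below -/
import Mathlib

section
/- For any multigraph G (no loops), the chromatic index χ'(G) satisfies Δ(G) ≤ χ'(G) ≤ Δ(G) + μ(G), where Δ is the maximum degree and μ is the maximum edge multiplicity. -/
/-- A multigraph on vertex type `V` with edge type `E`: each edge has two distinct
endpoints (no loops), possibly with parallel edges. -/
structure Multigraph (V : Type*) (E : Type*) where
  ends : E → Sym2 V
  not_loop : ∀ e, ¬ (ends e).IsDiag

namespace Multigraph

variable {V E : Type*}

/-- Two edges are adjacent if they are distinct and share an endpoint. -/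
def Adjacent (G : Multigraph V E) (f g : E) : Prop :=
  f ≠ g ∧ ∃ v, v ∈ G.ends f ∧ v ∈ G.ends g

/-- A proper `k`-edge-coloring of the subgraph of `G` with edge set `F`. -/
def IsProperColoringOn (G : Multigraph V E) (F : Set E) (k : ℕ) (φ : E → Fin k) : Prop :=
  ∀ f ∈ F, ∀ g ∈ F, G.Adjacent f g → φ f ≠ φ g

/-- A proper `k`-edge-coloring of `G`. -/
def IsProperColoring (G : Multigraph V E) (k : ℕ) (φ : E → Fin k) : Prop :=
  G.IsProperColoringOn Set.univ k φ

/-- A proper `k`-edge-coloring of `G - e`. -/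
def IsProperColoringOff (G : Multigraph V E) (e : E) (k : ℕ) (φ : E → Fin k) : Prop :=
  G.IsProperColoringOn {e}ᶜ k φ

/-- The chromatic index of the subgraph with edge set `F`. -/
noncomputable def chromaticIndexOn (G : Multigraph V E) (F : Set E) : ℕ :=
  sInf {k | ∃ φ : E → Fin k, G.IsProperColoringOn F k φ}

/-- The chromatic index `χ'(G)`. -/
noncomputable def chromaticIndex (G : Multigraph V E) : ℕ :=
  G.chromaticIndexOn Set.univ

/-- The degree of a vertex. -/
noncomputable def degree (G : Multigraph V E) (v : V) : ℕ :=
  {e | v ∈ G.ends e}.ncard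

/-- The maximum degree `Δ(G)`. -/
noncomputable def maxDegree (G : Multigraph V E) : ℕ :=
  sSup (Set.range G.degree)

/-- The multiplicity `μ(G)`: the maximum number of parallel edges between two vertices. -/
noncomputable def multiplicity (G : Multigraph V E) : ℕ :=
  sSup (Set.range (fun p : V × V => {e | G.ends e = s(p.1, p.2)}.ncard))

/-- A set of edges is a matching if no two distinct members share a vertex. -/
def IsMatching (G : Multigraph V E) (M : Finset E) : Prop :=
  ∀ f ∈ M, ∀ g ∈ M, f ≠ g → ¬ ∃ v, v ∈ G.ends f ∧ v ∈ G.ends g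

/-- A fractional edge coloring: a nonnegative weighting of matchings such that every
edge receives total weight exactly `1`. -/
def IsFracColoring [Fintype E] [DecidableEq E] (G : Multigraph V E) (w : Finset E → ℝ) : Prop :=
  (∀ M, 0 ≤ w M) ∧ (∀ M, w M ≠ 0 → G.IsMatching M) ∧
    (∀ e : E, ∑ M : Finset E, (if e ∈ M then w M else 0) = 1)

/-- The fractional chromatic index `χ'_f(G)`. -/
noncomputable def fracChromaticIndex [Fintype E] [DecidableEq E] (G : Multigraph V E) : ℝ :=
  sInf {x : ℝ | ∃ w, G.IsFracColoring w ∧ ∑ M : Finset E, w M = x}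

/-- Color `c` is missing at `v` under the coloring `φ` of `G - e`. -/
def MissingAt (G : Multigraph V E) (e : E) {k : ℕ} (φ : E → Fin k) (v : V) (c : Fin k) : Prop :=
  ∀ f, f ≠ e → v ∈ G.ends f → φ f ≠ c

/-- `X` is elementary w.r.t. `φ`: the missing color sets of distinct vertices of `X`
are pairwise disjoint. -/
def IsElementary (G : Multigraph V E) (e : E) {k : ℕ} (φ : E → Fin k) (X : Set V) : Prop :=
  ∀ x ∈ X, ∀ y ∈ X, x ≠ y → ∀ c, G.MissingAt e φ x c → ¬ G.MissingAt e φ y c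

/-- An edge with exactly one end in `X`. -/
def IsBoundaryEdge (G : Multigraph V E) (X : Set V) (f : E) : Prop :=
  (∃ v ∈ G.ends f, v ∈ X) ∧ (∃ v ∈ G.ends f, v ∉ X)

/-- `X` is closed w.r.t. `φ`: no color missing at a vertex of `X` appears on a
boundary edge of `X`. -/
def IsClosed (G : Multigraph V E) (e : E) {k : ℕ} (φ : E → Fin k) (X : Set V) : Prop :=
  ∀ f, f ≠ e → G.IsBoundaryEdge X f → ∀ u ∈ X, ¬ G.MissingAt e φ u (φ f)

/-- `X` is strongly closed: closed, and every color appears on at most one boundary edge. -/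
def IsStronglyClosed (G : Multigraph V E) (e : E) {k : ℕ} (φ : E → Fin k) (X : Set V) : Prop :=
  G.IsClosed e φ X ∧
    ∀ f g, f ≠ e → g ≠ e → G.IsBoundaryEdge X f → G.IsBoundaryEdge X g →
      φ f = φ g → f = g

/-- The vertex set spanned by the first `j` edges of the sequence `t`. -/
def TSet (G : Multigraph V E) (t : ℕ → E) (j : ℕ) : Set V :=
  {v | ∃ i < j, v ∈ G.ends (t i)}

/-- `t 0, …, t (p-1)` is a Tashkinov tree of `(G, e, φ)`: it starts with `e`, and each
subsequent edge is a boundary edge of the tree built so far whose color is missing at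
some vertex of that tree. -/
def IsTashkinov (G : Multigraph V E) (e : E) {k : ℕ} (φ : E → Fin k) (p : ℕ) (t : ℕ → E) : Prop :=
  0 < p ∧ t 0 = e ∧
    ∀ i, 1 ≤ i → i < p →
      t i ≠ e ∧ G.IsBoundaryEdge (G.TSet t i) (t i) ∧
        ∃ u ∈ G.TSet t i, G.MissingAt e φ u (φ (t i))

/-- The set of colors used on the (colored) edges of the tree. -/
def usedColors (G : Multigraph V E) (e : E) {k : ℕ} (φ : E → Fin k) (p : ℕ) (t : ℕ → E) :
    Set (Fin k) :=
  {c | ∃ i < p, t i ≠ e ∧ φ (t i) = c}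

/-- The free colors of the tree: colors missing at some vertex of the tree and not
used on any edge of the tree. -/
def freeColors (G : Multigraph V E) (e : E) {k : ℕ} (φ : E → Fin k) (p : ℕ) (t : ℕ → E) :
    Set (Fin k) :=
  {c | (∃ u ∈ G.TSet t p, G.MissingAt e φ u c) ∧ c ∉ G.usedColors e φ p t}

/-- The Tashkinov tree `t` is `e`-maximal: no Tashkinov tree of `(G, e, φ*)`, for any
proper `k`-edge-coloring `φ*` of `G - e`, properly contains it. -/
def IsEMaximal (G : Multigraph V E) (e : E) (k : ℕ) (p : ℕ) (t : ℕ → E) : Prop :=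
  ¬ ∃ (φ' : E → Fin k) (p' : ℕ) (t' : ℕ → E),
      G.IsProperColoringOff e k φ' ∧ G.IsTashkinov e φ' p' t' ∧
      {f | ∃ i < p, t i = f} ⊂ {f | ∃ j < p', t' j = f}

/-- `t` is a balanced Tashkinov tree with trunk of `h` vertices: the first `h - 1`
edges form a path whose first edge is `e` and whose colored edges alternate between a
color `α` missing at one end of `e` and a color `β` missing at the other end, and the
remaining edges are added in pairs with equal colors. -/
def IsBalanced (G : Multigraph V E) (e : E) {k : ℕ} (φ : E → Fin k) (p : ℕ) (t : ℕ → E)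
    (h : ℕ) : Prop :=
  2 ≤ h ∧ h ≤ p + 1 ∧ (p - (h - 1)) % 2 = 0 ∧
  (∃ (v : ℕ → V) (α β : Fin k),
    (∀ i j, i < h → j < h → v i = v j → i = j) ∧
    (∀ i, i < h - 1 → G.ends (t i) = s(v i, v (i + 1))) ∧
    G.MissingAt e φ (v 1) α ∧ G.MissingAt e φ (v 0) β ∧
    (∀ i, 1 ≤ i → i < h - 1 → φ (t i) = if i % 2 = 1 then α else β)) ∧
  (∀ j, h - 1 ≤ j → j < p → (j - (h - 1)) % 2 = 0 →
    j + 1 < p ∧ φ (t j) = φ (t (j + 1)))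

end Multigraph


/-!
Every proper coloring gives the edges at a vertex distinct colors, so `Δ ≤ χ'`.

For `χ' ≤ Δ + μ` (Vizing), color the edges one at a time with `k = Δ + μ` colors. When every edge
but `e = x y₀` is colored, each vertex misses at least `μ` colors; let `α` be missing at `x`. Take a
maximal fan `e = t 0, …, t s` at `x`, where `t i` joins `x` to `y i` and the color of `t (i + 1)` is
missing at `y i`; recoloring each `t r` with `r < i` by the color of `t (r + 1)` moves the
uncolored edge to `t i`. If some color is missing at both `x` and `y s`, move the uncolored edge to
`t s` and use it. Otherwise, by maximality, every color `β` missing at `y s` sits on a fan edge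
`t (r + 1)`. If `y r ≠ y s` for one of them, the `(α, β)`-Kempe chain from `x` is a path and cannot
reach both `y r` and `y s`; interchanging `α` and `β` on the chain through the other one frees `α`
at both ends of an uncolored `t i`. If `y r = y s` for all of them, then `t s` has at least `μ + 1`
parallel edges.
-/

theorem Set.ncard_setOf_subtype_le {E : Type*} [Finite E] (F : Set E) (p : E → Prop) :
    {f : F | p f}.ncard ≤ {f | p f}.ncard :=
  Set.ncard_le_ncard_of_injOn Subtype.val (fun _ hf => hf) Subtype.val_injective.injOn

namespace SimpleGraph

variable {V : Type*} {S T : SimpleGraph V}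

theorem Reachable.of_forall_adj (h : ∀ p q, S.Adj p q → T.Reachable p q) {u v : V}
    (huv : S.Reachable u v) : T.Reachable u v := by
  rw [reachable_iff_reflTransGen] at huv ⊢
  exact Relation.reflTransGen_closed (fun p q hpq => (reachable_iff_reflTransGen p q).1 (h p q hpq))
    _ _ huv

/-- Handshaking in the component `C` of `x`: `C` has at least `|C| - 1` edges, but its degree sum
is at most `2 |C| - 3` once it contains three vertices of degree at most one. -/
theorem eq_of_reachable_of_degree_le_one [Fintype V] [DecidableRel S.Adj] {x a b : V}
    (hdeg : ∀ v, S.degree v ≤ 2) (hx : S.degree x ≤ 1) (ha : S.degree a ≤ 1)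
    (hb : S.degree b ≤ 1) (hxa : x ≠ a) (hxb : x ≠ b) (hra : S.Reachable x a)
    (hrb : S.Reachable x b) : a = b := by
  classical
  by_contra hab
  set C := S.connectedComponentMk x
  have hmem : ∀ v, S.Reachable x v → v ∈ C := fun v h =>
    (C.mem_supp_iff v).2 (ConnectedComponent.eq.2 h.symm)
  have hdegC : ∀ v : C, C.toSimpleGraph.degree v ≤ S.degree v := by
    intro v
    rw [← card_neighborSet_eq_degree, ← card_neighborSet_eq_degree]
    exact Fintype.card_le_of_injective (fun w => ⟨w.1.1, w.2⟩)
      fun w w' h => Subtype.ext (Subtype.ext (congrArg Subtype.val h :))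
  let L : Finset C := {⟨x, hmem x .rfl⟩, ⟨a, hmem a hra⟩, ⟨b, hmem b hrb⟩}
  have hL : L.card = 3 := by
    simp [L, Finset.card_insert_of_notMem, hxa, hxb, hab]
  have hsum : ∑ v, C.toSimpleGraph.degree v + L.card ≤ 2 * Fintype.card C :=
    calc ∑ v, C.toSimpleGraph.degree v + L.card
        = ∑ v, (C.toSimpleGraph.degree v + if v ∈ L then 1 else 0) := by
          simp [Finset.sum_add_distrib]
      _ ≤ ∑ _v : C, 2 := Finset.sum_le_sum fun v _ => by
          have hv₁ := hdegC v
          split_ifs with hv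
          · have : S.degree v ≤ 1 := by
              simp only [L, Finset.mem_insert, Finset.mem_singleton] at hv
              rcases hv with rfl | rfl | rfl <;> assumption
            omega
          · have := hdeg v
            omega
      _ = 2 * Fintype.card C := by simp [mul_comm]
  have hE := C.toSimpleGraph.sum_degrees_eq_twice_card_edges
  have hconn := C.connected_toSimpleGraph.card_vert_le_card_edgeSet_add_one
  rw [Nat.card_eq_fintype_card, Nat.card_eq_fintype_card, ← edgeFinset_card] at hconn
  omega

end SimpleGraph

namespace Multigraph

variable {V E : Type*} {G : Multigraph V E} {k m : ℕ} {e : E} {φ : E → Fin k}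

section Recoloring

variable {g g' : E} {ψ : E → Fin k} {x y v : V} {c : Fin k}

theorem ne_of_ends_eq {f : E} (h : G.ends f = s(x, y)) : x ≠ y := fun hxy =>
  G.not_loop f (by rw [h, hxy]; exact Sym2.mk_isDiag_iff.2 rfl)

theorem IsProperColoringOff.apply_ne (hφ : G.IsProperColoringOff e k φ) {f f' : E} (hf : f ≠ e)
    (hf' : f' ≠ e) (hne : f ≠ f') (hv : v ∈ G.ends f) (hv' : v ∈ G.ends f') : φ f ≠ φ f' :=
  hφ f hf f' hf' ⟨hne, v, hv, hv'⟩

theorem MissingAt.apply_ne (h : G.MissingAt e φ v c) {f : E} (hf : f ≠ e) (hv : v ∈ G.ends f) :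
    φ f ≠ c :=
  h f hf hv

theorem exists_eq_of_not_missingAt (h : ¬ G.MissingAt e φ v c) :
    ∃ f, f ≠ e ∧ v ∈ G.ends f ∧ φ f = c := by
  simpa [MissingAt] using h

theorem sub_degree_le_ncard_missingAt [Finite E] (e : E) (φ : E → Fin k) (v : V) :
    k - G.degree v ≤ {c | G.MissingAt e φ v c}.ncard := by
  have hcompl : {c | G.MissingAt e φ v c}ᶜ ⊆ φ '' {f | v ∈ G.ends f} := fun c hc => by
    obtain ⟨f, -, hv, rfl⟩ := exists_eq_of_not_missingAt hc
    exact ⟨f, hv, rfl⟩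
  have h := Set.ncard_add_ncard_compl {c | G.MissingAt e φ v c}
  have := (Set.ncard_le_ncard hcompl).trans (Set.ncard_image_le (Set.toFinite _))
  simp only [Nat.card_eq_fintype_card, Fintype.card_fin] at h
  unfold degree
  omega

variable [DecidableEq E]

/-- The color of `g'` leaves `x` together with `g'`, and it is missing at `y`. -/
theorem IsProperColoringOff.update_of_missingAt (hψ : G.IsProperColoringOff g k ψ)
    (hg : G.ends g = s(x, y)) (hx : x ∈ G.ends g') (hy : G.MissingAt g ψ y (ψ g')) :
    G.IsProperColoringOff g' k (Function.update ψ g (ψ g')) := by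
  have key : ∀ f, f ≠ g' → f ≠ g → g' ≠ g → ∀ w ∈ G.ends g, w ∈ G.ends f → ψ f ≠ ψ g' := by
    intro f hfg' hfg hg'g w hw hwf
    rw [hg, Sym2.mem_iff] at hw
    rcases hw with rfl | rfl
    · exact hψ.apply_ne hfg hg'g hfg' hwf hx
    · exact hy.apply_ne hfg hwf
  rintro f₁ hf₁ f₂ hf₂ ⟨hne, w, hw₁, hw₂⟩
  by_cases h₁ : f₁ = g <;> by_cases h₂ : f₂ = g
  · exact absurd (h₁.trans h₂.symm) hne
  · subst h₁
    simpa [h₂] using (key f₂ hf₂ h₂ (Ne.symm hf₁) w hw₁ hw₂).symm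
  · subst h₂
    simpa [h₁] using key f₁ hf₁ h₁ (Ne.symm hf₂) w hw₂ hw₁
  · simpa [h₁, h₂] using hψ.apply_ne h₁ h₂ hne hw₁ hw₂

theorem MissingAt.update (h : G.MissingAt g ψ v c) {d : Fin k} (hd : v ∈ G.ends g → d ≠ c) :
    G.MissingAt g' (Function.update ψ g d) v c := by
  intro f _ hv
  rcases eq_or_ne f g with rfl | hfg
  · simpa using hd hv
  · simpa [hfg] using h.apply_ne hfg hv

theorem IsProperColoringOff.isProperColoring_update (hψ : G.IsProperColoringOff g k ψ)
    (hg : G.ends g = s(x, y)) (hx : G.MissingAt g ψ x c) (hy : G.MissingAt g ψ y c) :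
    G.IsProperColoring k (Function.update ψ g c) := by
  have key : ∀ f, f ≠ g → ∀ w ∈ G.ends g, w ∈ G.ends f → ψ f ≠ c := by
    intro f hfg w hw hwf
    rw [hg, Sym2.mem_iff] at hw
    rcases hw with rfl | rfl
    · exact hx.apply_ne hfg hwf
    · exact hy.apply_ne hfg hwf
  rintro f₁ - f₂ - ⟨hne, w, hw₁, hw₂⟩
  by_cases h₁ : f₁ = g <;> by_cases h₂ : f₂ = g
  · exact absurd (h₁.trans h₂.symm) hne
  · subst h₁
    simpa [h₂] using (key f₂ h₂ w hw₁ hw₂).symm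
  · subst h₂
    simpa [h₁] using key f₁ h₁ w hw₂ hw₁
  · simpa [h₁, h₂] using hψ.apply_ne h₁ h₂ hne hw₁ hw₂

end Recoloring

section Kempe

variable {α β γ : Fin k} {x v w : V}

def kempeGraph (G : Multigraph V E) (e : E) (φ : E → Fin k) (α β : Fin k) : SimpleGraph V where
  Adj u v := ∃ f ≠ e, G.ends f = s(u, v) ∧ (φ f = α ∨ φ f = β)
  symm := ⟨fun _ _ ⟨f, hf, h, hc⟩ => ⟨f, hf, h.trans Sym2.eq_swap, hc⟩⟩
  loopless := ⟨fun _ ⟨_, _, h, _⟩ => ne_of_ends_eq h rfl⟩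

theorem kempeGraph_adj {u v : V} : (G.kempeGraph e φ α β).Adj u v ↔
    ∃ f ≠ e, G.ends f = s(u, v) ∧ (φ f = α ∨ φ f = β) :=
  Iff.rfl

theorem reachable_kempeGraph_of_mem {f : E} (hf : f ≠ e) (hc : φ f = α ∨ φ f = β)
    (hv : v ∈ G.ends f) (hw : w ∈ G.ends f) : (G.kempeGraph e φ α β).Reachable v w := by
  rcases eq_or_ne v w with rfl | hvw
  · rfl
  · exact (kempeGraph_adj.2 ⟨f, hf, (Sym2.mem_and_mem_iff hvw).1 ⟨hv, hw⟩, hc⟩).reachable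

def colorNeighborSet (G : Multigraph V E) (e : E) (φ : E → Fin k) (v : V) (γ : Fin k) : Set V :=
  {u | ∃ f ≠ e, G.ends f = s(v, u) ∧ φ f = γ}

theorem ncard_colorNeighborSet_le_one [Finite V] (hφ : G.IsProperColoringOff e k φ) (v : V)
    (γ : Fin k) : (G.colorNeighborSet e φ v γ).ncard ≤ 1 := by
  refine (Set.ncard_le_one).2 fun u ⟨f, hf, hu, hfγ⟩ w ⟨f', hf', hw, hf'γ⟩ => ?_
  by_cases hff' : f = f'
  · subst hff'
    exact Sym2.congr_right.1 (hu.symm.trans hw)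
  · exact absurd (hfγ.trans hf'γ.symm) <|
      hφ.apply_ne hf hf' hff' (hu ▸ Sym2.mem_mk_left _ _) (hw ▸ Sym2.mem_mk_left _ _)

theorem MissingAt.colorNeighborSet_eq_empty (h : G.MissingAt e φ v γ) :
    G.colorNeighborSet e φ v γ = ∅ :=
  Set.eq_empty_of_forall_notMem fun _ ⟨_, hf, hends, hγ⟩ =>
    h.apply_ne hf (hends ▸ Sym2.mem_mk_left _ _) hγ

theorem kempeGraph_degree_le [Fintype V] [DecidableRel (G.kempeGraph e φ α β).Adj] (v : V) :
    (G.kempeGraph e φ α β).degree v ≤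
      (G.colorNeighborSet e φ v α).ncard + (G.colorNeighborSet e φ v β).ncard := by
  rw [← SimpleGraph.card_neighborSet_eq_degree, ← Nat.card_eq_fintype_card, Nat.card_coe_set_eq]
  refine (Set.ncard_le_ncard fun u hu => ?_).trans (Set.ncard_union_le _ _)
  obtain ⟨f, hf, hends, hα | hβ⟩ := kempeGraph_adj.1 hu
  exacts [Or.inl ⟨f, hf, hends, hα⟩, Or.inr ⟨f, hf, hends, hβ⟩]

/-- Every vertex has at most two Kempe neighbours, and at most one if it misses `α` or `β`: the
chain through `x` is a path ending at `x`. -/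
theorem eq_of_reachable_kempeGraph [Fintype V] {a b : V} (hφ : G.IsProperColoringOff e k φ)
    (hx : G.MissingAt e φ x α) (ha : G.MissingAt e φ a β) (hb : G.MissingAt e φ b β)
    (hxa : x ≠ a) (hxb : x ≠ b) (hra : (G.kempeGraph e φ α β).Reachable x a)
    (hrb : (G.kempeGraph e φ α β).Reachable x b) : a = b := by
  classical
  have hle := fun v => G.kempeGraph_degree_le (e := e) (φ := φ) (α := α) (β := β) v
  have hone := ncard_colorNeighborSet_le_one hφ
  refine SimpleGraph.eq_of_reachable_of_degree_le_one
    (fun v => (hle v).trans (add_le_add (hone v α) (hone v β))) ?_ ?_ ?_ hxa hxb hra hrb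
  · simpa [hx.colorNeighborSet_eq_empty] using (hle x).trans (add_le_add_right (hone x β) _)
  · simpa [ha.colorNeighborSet_eq_empty] using (hle a).trans (add_le_add_left (hone a α) _)
  · simpa [hb.colorNeighborSet_eq_empty] using (hle b).trans (add_le_add_left (hone b α) _)

open Classical in
/-- `Equiv.swap α β` fixes every other color, so only the edges of the chain through `w` change. -/
noncomputable def kempeSwap (G : Multigraph V E) (e : E) (φ : E → Fin k) (α β : Fin k) (w : V) :
    E → Fin k := fun f =>
  if ∃ v ∈ G.ends f, (G.kempeGraph e φ α β).Reachable w v then Equiv.swap α β (φ f) else φ f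

theorem kempeSwap_apply_of_reachable {f : E}
    (h : ∃ v ∈ G.ends f, (G.kempeGraph e φ α β).Reachable w v) :
    G.kempeSwap e φ α β w f = Equiv.swap α β (φ f) :=
  if_pos h

theorem kempeSwap_apply_of_not_reachable {f : E}
    (h : ¬ ∃ v ∈ G.ends f, (G.kempeGraph e φ α β).Reachable w v) :
    G.kempeSwap e φ α β w f = φ f :=
  if_neg h

theorem IsProperColoringOff.kempeSwap (hφ : G.IsProperColoringOff e k φ) (α β : Fin k) (w : V) :
    G.IsProperColoringOff e k (G.kempeSwap e φ α β w) := by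
  set R := (G.kempeGraph e φ α β).Reachable w
  have mixed : ∀ f f', f ≠ e → f' ≠ e → f ≠ f' → ∀ v ∈ G.ends f, v ∈ G.ends f' →
      (∃ u ∈ G.ends f, R u) → (¬ ∃ u ∈ G.ends f', R u) → Equiv.swap α β (φ f) ≠ φ f' := by
    rintro f f' hf hf' hff' v hv hv' ⟨u, hu, hRu⟩ hnot
    by_cases hc : φ f = α ∨ φ f = β
    · exact absurd ⟨v, hv', hRu.trans (reachable_kempeGraph_of_mem hf hc hu hv)⟩ hnot
    · rw [not_or] at hc
      rw [Equiv.swap_apply_of_ne_of_ne hc.1 hc.2]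
      exact hφ.apply_ne hf hf' hff' hv hv'
  rintro f hf f' hf' ⟨hff', v, hv, hv'⟩
  by_cases h : ∃ u ∈ G.ends f, R u <;> by_cases h' : ∃ u ∈ G.ends f', R u
  · rw [kempeSwap_apply_of_reachable h, kempeSwap_apply_of_reachable h']
    exact (Equiv.swap α β).injective.ne (hφ.apply_ne hf hf' hff' hv hv')
  · rw [kempeSwap_apply_of_reachable h, kempeSwap_apply_of_not_reachable h']
    exact mixed f f' hf hf' hff' v hv hv' h h'
  · rw [kempeSwap_apply_of_not_reachable h, kempeSwap_apply_of_reachable h']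
    exact (mixed f' f hf' hf (Ne.symm hff') v hv' hv h' h).symm
  · rw [kempeSwap_apply_of_not_reachable h, kempeSwap_apply_of_not_reachable h']
    exact hφ.apply_ne hf hf' hff' hv hv'

theorem MissingAt.kempeSwap_self (h : G.MissingAt e φ w β) :
    G.MissingAt e (G.kempeSwap e φ α β w) w α := by
  intro f hf hw
  rw [kempeSwap_apply_of_reachable ⟨w, hw, .rfl⟩, Ne, Equiv.swap_apply_eq_iff,
    Equiv.swap_apply_left]
  exact h.apply_ne hf hw

theorem MissingAt.kempeSwap_of_not_reachable {c : Fin k} (h : G.MissingAt e φ v c)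
    (hv : ¬ (G.kempeGraph e φ α β).Reachable w v) :
    G.MissingAt e (G.kempeSwap e φ α β w) v c := by
  intro f hf hvf
  by_cases hR : ∃ u ∈ G.ends f, (G.kempeGraph e φ α β).Reachable w u
  · obtain ⟨u, hu, hRu⟩ := hR
    have hc : φ f ≠ α ∧ φ f ≠ β := by
      rw [← not_or]
      exact fun hc => hv (hRu.trans (reachable_kempeGraph_of_mem hf hc hu hvf))
    rw [kempeSwap_apply_of_reachable ⟨u, hu, hRu⟩, Equiv.swap_apply_of_ne_of_ne hc.1 hc.2]
    exact h.apply_ne hf hvf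
  · rw [kempeSwap_apply_of_not_reachable hR]
    exact h.apply_ne hf hvf

/-- Kempe's argument: after the interchange on the chain through `w`, `α` is missing at both ends
of the uncolored edge. -/
theorem IsProperColoringOff.exists_isProperColoring_of_not_reachable [DecidableEq E]
    (hφ : G.IsProperColoringOff e k φ) (he : G.ends e = s(x, w)) (hx : G.MissingAt e φ x α)
    (hw : G.MissingAt e φ w β) (hwx : ¬ (G.kempeGraph e φ α β).Reachable w x) :
    ∃ ψ, G.IsProperColoring k ψ :=
  ⟨_, (hφ.kempeSwap α β w).isProperColoring_update he (hx.kempeSwap_of_not_reachable hwx)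
    hw.kempeSwap_self⟩

end Kempe

section Fan

variable {x : V} {t : ℕ → E} {y : ℕ → V} {s i : ℕ} {α β c : Fin k}

structure IsFan (G : Multigraph V E) (e : E) (φ : E → Fin k) (x : V) (t : ℕ → E) (y : ℕ → V)
    (s : ℕ) : Prop where
  apply_zero : t 0 = e
  ends_eq : ∀ i ≤ s, G.ends (t i) = s(x, y i)
  injOn : Set.InjOn t (Set.Iic s)
  missingAt : ∀ i < s, G.MissingAt e φ (y i) (φ (t (i + 1)))

theorem IsFan.mem_ends (hfan : G.IsFan e φ x t y s) (hi : i ≤ s) : x ∈ G.ends (t i) :=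
  hfan.ends_eq i hi ▸ Sym2.mem_mk_left _ _

theorem IsFan.ne_apply (hfan : G.IsFan e φ x t y s) (hi : i ≤ s) : x ≠ y i :=
  ne_of_ends_eq (hfan.ends_eq i hi)

theorem IsFan.apply_succ_ne (hfan : G.IsFan e φ x t y s) (hi : i < s) : t (i + 1) ≠ e := fun h =>
  i.succ_ne_zero <| hfan.injOn (Set.mem_Iic.2 hi) (Set.mem_Iic.2 (Nat.zero_le s))
    (h.trans hfan.apply_zero.symm)

theorem IsFan.color_succ_ne_of_missingAt (hfan : G.IsFan e φ x t y s)
    (hc : G.MissingAt e φ x c) (hi : i < s) : φ (t (i + 1)) ≠ c :=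
  hc.apply_ne (hfan.apply_succ_ne hi) (hfan.mem_ends hi)

theorem IsFan.eq_of_color_succ_eq (hfan : G.IsFan e φ x t y s) (hφ : G.IsProperColoringOff e k φ)
    {j : ℕ} (hi : i < s) (hj : j < s) (h : φ (t (i + 1)) = φ (t (j + 1))) : i = j := by
  by_contra hij
  have hne : t (i + 1) ≠ t (j + 1) := fun h' =>
    hij (by simpa using hfan.injOn (Set.mem_Iic.2 hi) (Set.mem_Iic.2 hj) h')
  exact hφ.apply_ne (hfan.apply_succ_ne hi) (hfan.apply_succ_ne hj) hne (hfan.mem_ends hi)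
    (hfan.mem_ends hj) h

theorem IsFan.succ_le_card [Finite E] (hfan : G.IsFan e φ x t y s) : s + 1 ≤ Nat.card E := by
  simpa using Nat.card_le_card_of_injective (fun i : Fin (s + 1) => t i) fun i j h =>
    Fin.ext (hfan.injOn (Set.mem_Iic.2 (Nat.lt_succ_iff.1 i.2))
      (Set.mem_Iic.2 (Nat.lt_succ_iff.1 j.2)) h)

theorem IsFan.snoc (hfan : G.IsFan e φ x t y s) {f : E} {w : V} (hf : G.ends f = s(x, w))
    (hnew : ∀ i ≤ s, t i ≠ f) (hmiss : G.MissingAt e φ (y s) (φ f)) :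
    G.IsFan e φ x (Function.update t (s + 1) f) (Function.update y (s + 1) w) (s + 1) where
  apply_zero := by simpa using hfan.apply_zero
  ends_eq i hi := by
    rcases eq_or_ne i (s + 1) with rfl | hi'
    · simpa using hf
    · simpa [hi'] using hfan.ends_eq i (by omega)
  injOn i hi j hj hij := by
    simp only [Set.mem_Iic] at hi hj
    rcases eq_or_ne i (s + 1) with rfl | hi' <;> rcases eq_or_ne j (s + 1) with rfl | hj'
    · rfl
    · simp only [Function.update_self, Function.update_of_ne hj'] at hij
      exact absurd hij.symm (hnew j (by omega))
    · simp only [Function.update_self, Function.update_of_ne hi'] at hij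
      exact absurd hij (hnew i (by omega))
    · simp only [Function.update_of_ne hi', Function.update_of_ne hj'] at hij
      exact hfan.injOn (Set.mem_Iic.2 (by omega)) (Set.mem_Iic.2 (by omega)) hij
  missingAt i hi := by
    rcases eq_or_ne i s with rfl | hi'
    · simpa using hmiss
    · simpa [hi', show i ≠ s + 1 by omega] using hfan.missingAt i (by omega)

theorem exists_maximal_isFan [Finite E] {y₀ : V} (he : G.ends e = s(x, y₀)) :
    ∃ t y s, G.IsFan e φ x t y s ∧
      ∀ f, x ∈ G.ends f → G.MissingAt e φ (y s) (φ f) → ∃ i ≤ s, t i = f := by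
  classical
  let P s := ∃ t y, G.IsFan e φ x t y s
  have h₀ : P 0 := ⟨fun _ => e, fun _ => y₀,
    { apply_zero := rfl
      ends_eq := fun _ _ => he
      injOn := fun i hi j hj _ => by simp only [Set.mem_Iic] at hi hj; omega
      missingAt := fun i hi => absurd hi (Nat.not_lt_zero i) }⟩
  obtain ⟨t, y, hfan⟩ := Nat.findGreatest_spec (Nat.zero_le (Nat.card E)) h₀
  refine ⟨t, y, _, hfan, fun f hxf hmiss => ?_⟩
  by_contra! hnew
  obtain ⟨w, hw⟩ := Sym2.mem_iff_exists.1 hxf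
  have hsnoc := hfan.snoc hw hnew hmiss
  have := hsnoc.succ_le_card
  exact Nat.findGreatest_is_greatest (P := P) (Nat.lt_succ_self _) (by omega) ⟨_, _, hsnoc⟩

/-- `r ↦ t r` embeds `{r < s | y r = y s} ∪ {s}` into the edges parallel to `t s`. -/
theorem IsFan.ncard_missingAt_lt [Finite E] (hfan : G.IsFan e φ x t y s)
    (hm : ∀ a b, {f | G.ends f = s(a, b)}.ncard ≤ m)
    (h : ∀ c, G.MissingAt e φ (y s) c → ∃ r < s, y r = y s ∧ φ (t (r + 1)) = c) :
    {c | G.MissingAt e φ (y s) c}.ncard < m := by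
  set R := {r | r < s ∧ y r = y s}
  have hR : R.Finite := (Set.finite_lt_nat s).subset fun _ hr => hr.1
  have hmiss : {c | G.MissingAt e φ (y s) c} ⊆ (fun r => φ (t (r + 1))) '' R := fun c hc => by
    obtain ⟨r, hr, hyr, rfl⟩ := h c hc
    exact ⟨r, ⟨hr, hyr⟩, rfl⟩
  have hpar : (insert s R).ncard ≤ {f | G.ends f = s(x, y s)}.ncard := by
    refine Set.ncard_le_ncard_of_injOn t ?_ (hfan.injOn.mono ?_)
    · rintro r (rfl | ⟨hr, hyr⟩)
      · exact hfan.ends_eq r le_rfl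
      · exact (hfan.ends_eq r hr.le).trans (by rw [hyr])
    · rintro r (rfl | ⟨hr, -⟩)
      exacts [Set.mem_Iic.2 le_rfl, Set.mem_Iic.2 hr.le]
  rw [Set.ncard_insert_of_notMem (fun h => h.1.false) hR] at hpar
  calc {c | G.MissingAt e φ (y s) c}.ncard ≤ R.ncard :=
        (Set.ncard_le_ncard hmiss (hR.image _)).trans (Set.ncard_image_le hR)
    _ < m := by have := hm x (y s); omega

variable [DecidableEq E]

/-- Moves the uncolored edge of a fan from `t 0` to `t i`. -/
def fanShift (φ : E → Fin k) (t : ℕ → E) : ℕ → E → Fin k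
  | 0 => φ
  | i + 1 => Function.update (fanShift φ t i) (t i) (φ (t (i + 1)))

theorem IsFan.fanShift_apply_of_le (hfan : G.IsFan e φ x t y s) {j : ℕ} (hij : i ≤ j)
    (hj : j ≤ s) : fanShift φ t i (t j) = φ (t j) := by
  induction i with
  | zero => rfl
  | succ i ih =>
    rw [fanShift, Function.update_of_ne fun h => ?_, ih (by omega)]
    have := hfan.injOn (Set.mem_Iic.2 hj) (Set.mem_Iic.2 (by omega : i ≤ s)) h
    omega

theorem missingAt_fanShift (h₀ : t 0 = e) {v : V} (h : G.MissingAt e φ v c)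
    (hi : ∀ r < i, v ∈ G.ends (t r) → φ (t (r + 1)) ≠ c) :
    G.MissingAt (t i) (fanShift φ t i) v c := by
  induction i with
  | zero => exact h₀ ▸ h
  | succ i ih => exact (ih fun r hr => hi r (by omega)).update (hi i (by omega))

theorem IsFan.missingAt_fanShift_center (hfan : G.IsFan e φ x t y s) (hc : G.MissingAt e φ x c)
    (hi : i ≤ s) : G.MissingAt (t i) (fanShift φ t i) x c :=
  missingAt_fanShift hfan.apply_zero hc fun _ hr _ => hfan.color_succ_ne_of_missingAt hc (by omega)

theorem IsFan.isProperColoringOff_fanShift (hfan : G.IsFan e φ x t y s)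
    (hφ : G.IsProperColoringOff e k φ) (hi : i ≤ s) :
    G.IsProperColoringOff (t i) k (fanShift φ t i) := by
  induction i with
  | zero => exact hfan.apply_zero ▸ hφ
  | succ i ih =>
    have hmiss : G.MissingAt (t i) (fanShift φ t i) (y i) (fanShift φ t i (t (i + 1))) := by
      rw [hfan.fanShift_apply_of_le (by omega) hi]
      exact missingAt_fanShift hfan.apply_zero (hfan.missingAt i hi) fun r hr _ h =>
        hr.ne (hfan.eq_of_color_succ_eq hφ (by omega) hi h)
    have := (ih (by omega)).update_of_missingAt (hfan.ends_eq i (by omega)) (hfan.mem_ends hi) hmiss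
    rwa [hfan.fanShift_apply_of_le (by omega) hi] at this

theorem kempeGraph_fanShift_adj (h₀ : t 0 = e) {p q : V}
    (h : (G.kempeGraph (t i) (fanShift φ t i) α β).Adj p q) :
    (G.kempeGraph e φ α β).Adj p q ∨
      ∃ r < i, G.ends (t r) = s(p, q) ∧ (φ (t (r + 1)) = α ∨ φ (t (r + 1)) = β) := by
  induction i with
  | zero => exact Or.inl (h₀ ▸ h)
  | succ i ih =>
    obtain ⟨f, hf, hends, hc⟩ := kempeGraph_adj.1 h
    rcases eq_or_ne f (t i) with rfl | hfi
    · exact Or.inr ⟨i, i.lt_succ_self, hends, by simpa [fanShift] using hc⟩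
    · simp only [fanShift, Function.update_of_ne hfi] at hc
      rcases ih (kempeGraph_adj.2 ⟨f, hfi, hends, hc⟩) with h | ⟨r, hr, h⟩
      exacts [Or.inl h, Or.inr ⟨r, by omega, h⟩]

theorem IsFan.reachable_of_reachable_fanShift (hfan : G.IsFan e φ x t y s) (hi : i ≤ s)
    (h : ∀ r < i, (φ (t (r + 1)) = α ∨ φ (t (r + 1)) = β) →
      (G.kempeGraph e φ α β).Reachable x (y r)) {p q : V}
    (hpq : (G.kempeGraph (t i) (fanShift φ t i) α β).Reachable p q) :
    (G.kempeGraph e φ α β).Reachable p q :=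
  hpq.of_forall_adj fun p q hpq => by
    rcases kempeGraph_fanShift_adj hfan.apply_zero hpq with h' | ⟨r, hr, hends, hc⟩
    · exact h'.reachable
    · rw [hfan.ends_eq r (by omega), Sym2.eq_iff] at hends
      rcases hends with ⟨rfl, rfl⟩ | ⟨rfl, rfl⟩
      exacts [h r hr hc, (h r hr hc).symm]

theorem IsFan.exists_isProperColoring_of_missingAt (hfan : G.IsFan e φ x t y s)
    (hφ : G.IsProperColoringOff e k φ) (hx : G.MissingAt e φ x c) (hy : G.MissingAt e φ (y s) c) :
    ∃ ψ, G.IsProperColoring k ψ :=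
  ⟨_, (hfan.isProperColoringOff_fanShift hφ le_rfl).isProperColoring_update (hfan.ends_eq s le_rfl)
    (hfan.missingAt_fanShift_center hx le_rfl)
    (missingAt_fanShift hfan.apply_zero hy fun _ hr _ => hfan.color_succ_ne_of_missingAt hx hr)⟩

/-- The chain from `x` misses `y r` or `y s`. If it misses `y r`, move the uncolored edge to `t r`;
otherwise move it to `t s`, which only adds the edge `t r` between `x` and `y r` to the chain. -/
theorem IsFan.exists_isProperColoring_of_ne [Fintype V] (hfan : G.IsFan e φ x t y s)
    (hφ : G.IsProperColoringOff e k φ) (hα : G.MissingAt e φ x α) (hβ : G.MissingAt e φ (y s) β)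
    {r : ℕ} (hr : r < s) (hrβ : φ (t (r + 1)) = β) (hyr : y r ≠ y s) :
    ∃ ψ, G.IsProperColoring k ψ := by
  have hcol : ∀ r' < s, (φ (t (r' + 1)) = α ∨ φ (t (r' + 1)) = β) → r' = r := fun r' hr' h =>
    h.elim (absurd · (hfan.color_succ_ne_of_missingAt hα hr'))
      fun h => hfan.eq_of_color_succ_eq hφ hr' hr (h.trans hrβ.symm)
  have hβr : G.MissingAt e φ (y r) β := hrβ ▸ hfan.missingAt r hr
  by_cases hreach : (G.kempeGraph e φ α β).Reachable x (y r)
  · have hs : ¬ (G.kempeGraph e φ α β).Reachable x (y s) := fun h =>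
      hyr (eq_of_reachable_kempeGraph hφ hα hβr hβ (hfan.ne_apply hr.le) (hfan.ne_apply le_rfl)
        hreach h)
    refine (hfan.isProperColoringOff_fanShift hφ le_rfl).exists_isProperColoring_of_not_reachable
      (hfan.ends_eq s le_rfl) (hfan.missingAt_fanShift_center hα le_rfl)
      (missingAt_fanShift hfan.apply_zero hβ fun r' hr' hmem hc => ?_)
      fun h => hs (hfan.reachable_of_reachable_fanShift le_rfl ?_ h).symm
    · rw [hcol r' hr' (Or.inr hc), hfan.ends_eq r hr.le, Sym2.mem_iff] at hmem
      exact hmem.elim (hfan.ne_apply le_rfl).symm hyr.symm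
    · intro r' hr' hc
      rwa [hcol r' hr' hc]
  · refine (hfan.isProperColoringOff_fanShift hφ hr.le).exists_isProperColoring_of_not_reachable
      (hfan.ends_eq r hr.le) (hfan.missingAt_fanShift_center hα hr.le)
      (missingAt_fanShift hfan.apply_zero hβr fun r' hr' _ hc => ?_)
      fun h => hreach (hfan.reachable_of_reachable_fanShift hr.le ?_ h).symm
    · exact hr'.ne (hcol r' (by omega) (Or.inr hc))
    · intro r' hr' hc
      exact absurd (hcol r' (by omega) hc) hr'.ne

end Fan

theorem IsProperColoringOff.exists_isProperColoring [Fintype V] [Finite E]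
    (hφ : G.IsProperColoringOff e k φ) (hm : ∀ a b, {f | G.ends f = s(a, b)}.ncard ≤ m)
    (hdeg : ∀ v, G.degree v + m ≤ k) : ∃ ψ, G.IsProperColoring k ψ := by
  classical
  obtain ⟨⟨x, y₀⟩, he⟩ := Sym2.mk_surjective (G.ends e)
  simp only [Function.uncurry_apply_pair] at he
  have hmiss : ∀ v, m ≤ {c | G.MissingAt e φ v c}.ncard := fun v => by
    have := G.sub_degree_le_ncard_missingAt e φ v
    have := hdeg v
    omega
  have hm₀ : 0 < m := ((Set.ncard_pos).2 ⟨e, he.symm⟩).trans_le (hm x y₀)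
  obtain ⟨α, hα⟩ := Set.nonempty_of_ncard_ne_zero (hm₀.trans_le (hmiss x)).ne'
  obtain ⟨t, y, s, hfan, hmax⟩ := exists_maximal_isFan (φ := φ) he.symm
  by_cases hA : ∃ c, G.MissingAt e φ x c ∧ G.MissingAt e φ (y s) c
  · obtain ⟨c, hx, hy⟩ := hA
    exact hfan.exists_isProperColoring_of_missingAt hφ hx hy
  by_cases hC : ∃ c r, G.MissingAt e φ (y s) c ∧ r < s ∧ φ (t (r + 1)) = c ∧ y r ≠ y s
  · obtain ⟨β, r, hβ, hr, hrβ, hyr⟩ := hC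
    exact hfan.exists_isProperColoring_of_ne hφ hα hβ hr hrβ hyr
  refine absurd (hfan.ncard_missingAt_lt hm fun c hc => ?_) (hmiss (y s)).not_gt
  obtain ⟨f, hfe, hxf, rfl⟩ := exists_eq_of_not_missingAt fun h => hA ⟨c, h, hc⟩
  obtain ⟨j, hj, rfl⟩ := hmax f hxf hc
  obtain ⟨r, rfl⟩ := Nat.exists_eq_succ_of_ne_zero fun h : j = 0 => hfe (by rw [h, hfan.apply_zero])
  exact ⟨r, hj, not_not.1 fun h => hC ⟨_, r, hc, hj, rfl, h⟩, rfl⟩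

def restrict (G : Multigraph V E) (F : Set E) : Multigraph V F :=
  ⟨fun f => G.ends f, fun f => G.not_loop f⟩

theorem IsProperColoringOn.isProperColoringOff_restrict_insert {F : Set E}
    (hφ : G.IsProperColoringOn F k φ) :
    (G.restrict (insert e F)).IsProperColoringOff ⟨e, Set.mem_insert e F⟩ k (φ ∘ Subtype.val) :=
  fun f hf f' hf' ⟨hne, v, hv, hv'⟩ =>
    hφ f (f.2.resolve_left fun h => hf (Subtype.ext h)) f'
      (f'.2.resolve_left fun h => hf' (Subtype.ext h)) ⟨fun h => hne (Subtype.ext h), v, hv, hv'⟩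

theorem IsProperColoring.isProperColoringOn_extend {F : Set E} {ψ : F → Fin k}
    (hψ : (G.restrict F).IsProperColoring k ψ) (φ : E → Fin k) :
    G.IsProperColoringOn F k (Function.extend Subtype.val ψ φ) := by
  intro f hf f' hf' ⟨hne, v, hv, hv'⟩
  rw [Subtype.val_injective.extend_apply ψ φ ⟨f, hf⟩,
    Subtype.val_injective.extend_apply ψ φ ⟨f', hf'⟩]
  exact hψ _ trivial _ trivial ⟨fun h => hne (congrArg Subtype.val h), v, hv, hv'⟩

theorem exists_isProperColoring_of_forall_degree_add_le [Fintype V] [Finite E]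
    (hm : ∀ a b, {f | G.ends f = s(a, b)}.ncard ≤ m) (hdeg : ∀ v, G.degree v + m ≤ k) :
    ∃ φ, G.IsProperColoring k φ := by
  classical
  cases nonempty_fintype E
  rcases isEmpty_or_nonempty E with hE | ⟨⟨e₀⟩⟩
  · exact ⟨isEmptyElim, fun f => isEmptyElim f⟩
  obtain ⟨⟨x, y⟩, he₀⟩ := Sym2.mk_surjective (G.ends e₀)
  simp only [Function.uncurry_apply_pair] at he₀
  have hk : 0 < k := by
    have := hdeg x
    have : 0 < G.degree x := (Set.ncard_pos).2 ⟨e₀, (he₀ ▸ Sym2.mem_mk_left x y :)⟩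
    omega
  suffices ∀ F : Finset E, ∃ φ : E → Fin k, G.IsProperColoringOn F k φ by
    simpa [IsProperColoring] using this Finset.univ
  intro F
  induction F using Finset.induction_on with
  | empty => exact ⟨fun _ => ⟨0, hk⟩, by simp [IsProperColoringOn]⟩
  | insert e F _ ih =>
    obtain ⟨φ, hφ⟩ := ih
    obtain ⟨ψ, hψ⟩ := hφ.isProperColoringOff_restrict_insert.exists_isProperColoring
      (fun a b => (Set.ncard_setOf_subtype_le _ _).trans (hm a b))
      fun v => (Nat.add_le_add_right (Set.ncard_setOf_subtype_le _ _) m).trans (hdeg v)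
    exact ⟨_, by simpa using hψ.isProperColoringOn_extend φ⟩

theorem IsProperColoring.degree_le (hφ : G.IsProperColoring k φ) (v : V) : G.degree v ≤ k := by
  refine (Set.ncard_le_ncard_of_injOn φ (fun _ _ => Set.mem_univ _) fun f hf f' hf' h => ?_).trans
    (by simp)
  by_contra hne
  exact hφ f trivial f' trivial ⟨hne, v, hf, hf'⟩ h

theorem chromaticIndex_le (hφ : G.IsProperColoring k φ) : G.chromaticIndex ≤ k :=
  Nat.sInf_le ⟨φ, hφ⟩

theorem exists_isProperColoring_chromaticIndex (hφ : G.IsProperColoring k φ) :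
    ∃ ψ, G.IsProperColoring G.chromaticIndex ψ :=
  Nat.sInf_mem (s := {k | ∃ φ : E → Fin k, G.IsProperColoring k φ}) ⟨k, φ, hφ⟩

end Multigraph

open Multigraph in
/-- `Δ(G) ≤ χ'(G) ≤ Δ(G) + μ(G)` for every multigraph `G`. -/
theorem maxDegree_le_chromaticIndex_le_add_multiplicity
    {V E : Type*} [Fintype V] [Fintype E] (G : Multigraph V E) :
    G.maxDegree ≤ G.chromaticIndex ∧ G.chromaticIndex ≤ G.maxDegree + G.multiplicity := by
  have hdeg : ∀ v, G.degree v ≤ G.maxDegree := fun v =>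
    le_csSup (Set.finite_range _).bddAbove ⟨v, rfl⟩
  have hmul : ∀ a b, {f | G.ends f = s(a, b)}.ncard ≤ G.multiplicity := fun a b =>
    le_csSup (Set.finite_range _).bddAbove ⟨(a, b), rfl⟩
  obtain ⟨φ, hφ⟩ := exists_isProperColoring_of_forall_degree_add_le hmul fun v =>
    Nat.add_le_add_right (hdeg v) _
  obtain ⟨ψ, hψ⟩ := exists_isProperColoring_chromaticIndex hφ
  exact ⟨csSup_le' (Set.forall_mem_range.2 hψ.degree_le), chromaticIndex_le hφ⟩
end

section
/- Let G be a multigraph, e ∈ E(G), k ≥ Δ(G)+1, φ a proper k-edge-coloring of G − e, and X ⊆ V(G) a set containing both ends of e that is elementary and strongly closed with respect to φ. Then |X| is odd and k = 2(|E(G[X])| − 1)/(|X| − 1); consequently k + 1 = ⌈2|E(G[X])|/(|X|−1)⌉. -/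
open Finset

open Multigraph in
/-- if `X` contains both ends of `e`, and is elementary and strongly closed
w.r.t. a proper `k`-edge-coloring of `G - e` with `k ≥ Δ + 1`, then `|X|` is odd,
`k = 2(|E(G[X])| - 1)/(|X| - 1)` and `k + 1 = ⌈2|E(G[X])|/(|X| - 1)⌉`. -/
theorem elementary_stronglyClosed_structure
    {V E : Type*} [Fintype V] [Fintype E] (G : Multigraph V E)
    (e : E) (k : ℕ) (hk : G.maxDegree + 1 ≤ k) (φ : E → Fin k)
    (hφ : G.IsProperColoringOff e k φ)
    (X : Finset V) (hX : ∀ v ∈ G.ends e, v ∈ X)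
    (helem : G.IsElementary e φ (↑X : Set V))
    (hclosed : G.IsStronglyClosed e φ (↑X : Set V)) :
    Odd X.card ∧
    (k : ℚ) = 2 * (({f : E | ∀ v ∈ G.ends f, v ∈ X}.ncard : ℚ) - 1) / ((X.card : ℚ) - 1) ∧
    ((k : ℤ) + 1) = ⌈(2 * ({f : E | ∀ v ∈ G.ends f, v ∈ X}.ncard : ℚ)) / ((X.card : ℚ) - 1)⌉ := by
  classical
  set n := X.card with hn
  have ends2 : ∀ f : E, ∃ a b : V, a ≠ b ∧ G.ends f = s(a, b) := by
    intro f
    have h := G.not_loop f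
    generalize heq : G.ends f = s at h ⊢
    induction s using Sym2.ind with
    | _ a b => exact ⟨a, b, fun h' => h (h' ▸ Sym2.mk_isDiag_iff.2 rfl), rfl⟩
  set I : Fin k → Finset E :=
    fun c => univ.filter (fun f => f ≠ e ∧ φ f = c ∧ ∀ v ∈ G.ends f, v ∈ X) with hI
  set B : Fin k → Finset E :=
    fun c => univ.filter (fun f => f ≠ e ∧ φ f = c ∧ G.IsBoundaryEdge (↑X : Set V) f) with hB
  set M : Fin k → Finset V :=
    fun c => X.filter (fun v => G.MissingAt e φ v c) with hM
  -- elementary: at most one vertex of X missing any color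
  have hMcard : ∀ c, (M c).card ≤ 1 := by
    intro c
    rw [Finset.card_le_one]
    intro u hu w hw
    simp only [hM, mem_filter] at hu hw
    by_contra hne
    exact helem u hu.1 w hw.1 hne c hu.2 hw.2
  -- strongly closed: at most one boundary edge per color
  have hBcard : ∀ c, (B c).card ≤ 1 := by
    intro c
    rw [Finset.card_le_one]
    intro f hf g hg
    simp only [hB, mem_filter] at hf hg
    exact hclosed.2 f g hf.2.1 hg.2.1 hf.2.2.2 hg.2.2.2 (hf.2.2.1.trans hg.2.2.1.symm)
  -- closed: missing color ⇒ no boundary edge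
  have hMB : ∀ c, 1 ≤ (M c).card → (B c).card = 0 := by
    intro c hc
    obtain ⟨u, hu⟩ := Finset.card_pos.mp hc
    simp only [hM, mem_filter] at hu
    rw [Finset.card_eq_zero, Finset.eq_empty_iff_forall_notMem]
    intro f hf
    simp only [hB, mem_filter] at hf
    exact hclosed.1 f hf.2.1 hf.2.2.2 u hu.1 (hf.2.2.1 ▸ hu.2)
  -- main counting identity
  have hcount : ∀ c, n = 2 * (I c).card + (B c).card + (M c).card := by
    intro c
    have fiber1 : ∀ v ∈ X, (univ.filter (fun f => f ≠ e ∧ φ f = c ∧ v ∈ G.ends f)).card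
        = if v ∈ M c then 0 else 1 := by
      intro v hv
      split_ifs with hvm
      · rw [Finset.card_eq_zero, Finset.eq_empty_iff_forall_notMem]
        intro f hf
        simp only [mem_filter, mem_univ, true_and] at hf
        simp only [hM, mem_filter] at hvm
        exact hvm.2 f hf.1 hf.2.2 hf.2.1
      · have hvm' : ¬ G.MissingAt e φ v c := by
          intro h; exact hvm (by simp only [hM, mem_filter]; exact ⟨hv, h⟩)
        rw [Multigraph.MissingAt] at hvm'
        push_neg at hvm'
        obtain ⟨f₀, hf₀e, hf₀v, hf₀c⟩ := hvm'
        rw [Finset.card_eq_one]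
        refine ⟨f₀, ?_⟩
        ext g
        simp only [mem_filter, mem_univ, true_and, Finset.mem_singleton]
        constructor
        · rintro ⟨hge, hgc, hgv⟩
          by_contra hne
          exact hφ g (by simp [hge]) f₀ (by simp [hf₀e]) ⟨hne, v, hgv, hf₀v⟩
            (hgc.trans hf₀c.symm)
        · rintro rfl; exact ⟨hf₀e, hf₀c, hf₀v⟩
    have keyA : (∑ v ∈ X, ∑ f : E, (if f ≠ e ∧ φ f = c ∧ v ∈ G.ends f then (1:ℕ) else 0))
        + (M c).card = n := by
      have h1 : ∀ v ∈ X, (∑ f : E, (if f ≠ e ∧ φ f = c ∧ v ∈ G.ends f then (1:ℕ) else 0))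
          = if v ∈ M c then 0 else 1 := by
        intro v hv
        rw [← Finset.card_filter]
        exact fiber1 v hv
      rw [Finset.sum_congr rfl h1]
      have h2 : (M c).card = ∑ v ∈ X, (if v ∈ M c then (1:ℕ) else 0) := by
        rw [← Finset.card_filter]
        congr 1
        ext v
        simp only [hM, mem_filter]
        tauto
      rw [h2, ← Finset.sum_add_distrib]
      have h3 : ∀ v ∈ X, ((if v ∈ M c then (0:ℕ) else 1) + (if v ∈ M c then 1 else 0)) = 1 := by
        intro v _; split_ifs <;> rfl
      rw [Finset.sum_congr rfl h3, Finset.sum_const, smul_eq_mul, mul_one]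
    have keyB : (∑ v ∈ X, ∑ f : E, (if f ≠ e ∧ φ f = c ∧ v ∈ G.ends f then (1:ℕ) else 0))
        = 2 * (I c).card + (B c).card := by
      rw [Finset.sum_comm]
      have h1 : ∀ f : E, (∑ v ∈ X, (if f ≠ e ∧ φ f = c ∧ v ∈ G.ends f then (1:ℕ) else 0))
          = (if f ∈ I c then 2 else 0) + (if f ∈ B c then 1 else 0) := by
        intro f
        have hImem : f ∈ I c ↔ f ≠ e ∧ φ f = c ∧ ∀ v ∈ G.ends f, v ∈ X := by
          simp [hI]
        have hBmem : f ∈ B c ↔ f ≠ e ∧ φ f = c ∧ G.IsBoundaryEdge (↑X : Set V) f := by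
          simp [hB]
        by_cases hfe : f ≠ e ∧ φ f = c
        · obtain ⟨a, b, hab, heq⟩ := ends2 f
          have hmem : ∀ v : V, v ∈ G.ends f ↔ v = a ∨ v = b := by
            intro v; rw [heq, Sym2.mem_iff]
          have hsum : (∑ v ∈ X, (if f ≠ e ∧ φ f = c ∧ v ∈ G.ends f then (1:ℕ) else 0))
              = (X.filter (fun v => v ∈ G.ends f)).card := by
            rw [Finset.card_filter]
            apply Finset.sum_congr rfl
            intro v _
            by_cases hv : v ∈ G.ends f <;> simp [hv, hfe.1, hfe.2]
          rw [hsum]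
          by_cases ha : a ∈ X <;> by_cases hb : b ∈ X
          · have hIf : f ∈ I c := hImem.mpr ⟨hfe.1, hfe.2, fun v hv => by
              rcases (hmem v).mp hv with rfl | rfl <;> assumption⟩
            have hBf : f ∉ B c := by
              rw [hBmem]
              rintro ⟨-, -, -, v, hv, hvX⟩
              rcases (hmem v).mp hv with rfl | rfl <;> exact hvX (by simpa)
            have : X.filter (fun v => v ∈ G.ends f) = {a, b} := by
              ext v
              simp only [mem_filter, hmem, Finset.mem_insert, Finset.mem_singleton]
              constructor
              · exact fun h => h.2
              · rintro (rfl | rfl) <;> simp [ha, hb]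
            rw [this, if_pos hIf, if_neg hBf]
            rw [Finset.card_insert_of_notMem (by simpa using hab), Finset.card_singleton]
          · have hIf : f ∉ I c := by
              rw [hImem]
              rintro ⟨-, -, h⟩
              exact hb (h b ((hmem b).mpr (Or.inr rfl)))
            have hBf : f ∈ B c := hBmem.mpr ⟨hfe.1, hfe.2,
              ⟨a, (hmem a).mpr (Or.inl rfl), by simpa⟩,
              ⟨b, (hmem b).mpr (Or.inr rfl), by simpa⟩⟩
            have : X.filter (fun v => v ∈ G.ends f) = {a} := by
              ext v
              simp only [mem_filter, hmem, Finset.mem_singleton]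
              constructor
              · rintro ⟨hvX, rfl | rfl⟩
                · rfl
                · exact absurd hvX hb
              · rintro rfl; exact ⟨ha, Or.inl rfl⟩
            rw [this, if_neg hIf, if_pos hBf]
            simp
          · have hIf : f ∉ I c := by
              rw [hImem]
              rintro ⟨-, -, h⟩
              exact ha (h a ((hmem a).mpr (Or.inl rfl)))
            have hBf : f ∈ B c := hBmem.mpr ⟨hfe.1, hfe.2,
              ⟨b, (hmem b).mpr (Or.inr rfl), by simpa⟩,
              ⟨a, (hmem a).mpr (Or.inl rfl), by simpa⟩⟩
            have : X.filter (fun v => v ∈ G.ends f) = {b} := by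
              ext v
              simp only [mem_filter, hmem, Finset.mem_singleton]
              constructor
              · rintro ⟨hvX, rfl | rfl⟩
                · exact absurd hvX ha
                · rfl
              · rintro rfl; exact ⟨hb, Or.inr rfl⟩
            rw [this, if_neg hIf, if_pos hBf]
            simp
          · have hIf : f ∉ I c := by
              rw [hImem]
              rintro ⟨-, -, h⟩
              exact ha (h a ((hmem a).mpr (Or.inl rfl)))
            have hBf : f ∉ B c := by
              rw [hBmem]
              rintro ⟨-, -, ⟨v, hv, hvX⟩, -⟩
              rcases (hmem v).mp hv with rfl | rfl
              · exact ha (by simpa using hvX)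
              · exact hb (by simpa using hvX)
            have : X.filter (fun v => v ∈ G.ends f) = ∅ := by
              rw [Finset.eq_empty_iff_forall_notMem]
              intro v hv
              simp only [mem_filter, hmem] at hv
              rcases hv.2 with rfl | rfl
              · exact ha hv.1
              · exact hb hv.1
            rw [this, if_neg hIf, if_neg hBf]
            simp
        · have hIf : f ∉ I c := by rw [hImem]; tauto
          have hBf : f ∉ B c := by rw [hBmem]; tauto
          rw [if_neg hIf, if_neg hBf]
          have hz : ∀ v ∈ X, (if f ≠ e ∧ φ f = c ∧ v ∈ G.ends f then (1:ℕ) else 0) = 0 := by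
            intro v _; rw [if_neg]; tauto
          rw [Finset.sum_congr rfl hz]
          simp
      rw [Finset.sum_congr rfl (fun f _ => h1 f), Finset.sum_add_distrib]
      congr 1
      · rw [Finset.sum_ite_mem, Finset.univ_inter, Finset.sum_const, smul_eq_mul, mul_comm]
      · rw [Finset.sum_ite_mem, Finset.univ_inter, Finset.sum_const, smul_eq_mul, mul_one]
    omega
  -- some color is missing at an end of e
  have hexM : ∃ c, 1 ≤ (M c).card := by
    obtain ⟨a, b, hab, heq⟩ := ends2 e
    have ha : a ∈ X := hX a (heq ▸ Sym2.mem_mk_left a b)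
    set D := univ.filter (fun f : E => a ∈ G.ends f) with hD
    have hdeg : D.card = G.degree a := by
      rw [Multigraph.degree]
      have h : {f : E | a ∈ G.ends f} = ↑D := by ext f; simp [hD]
      rw [h, Set.ncard_coe_finset]
    have hdle : G.degree a ≤ G.maxDegree := by
      apply le_csSup
      · refine ⟨Fintype.card E, ?_⟩
        rintro _ ⟨v, rfl⟩
        rw [Multigraph.degree]
        calc {f : E | v ∈ G.ends f}.ncard ≤ (Set.univ : Set E).ncard :=
              Set.ncard_le_ncard (Set.subset_univ _) Set.finite_univ
          _ = Fintype.card E := by rw [Set.ncard_univ, Nat.card_eq_fintype_card]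
      · exact ⟨a, rfl⟩
    have himg : (D.image φ).card < k := by
      calc (D.image φ).card ≤ D.card := Finset.card_image_le
        _ ≤ G.maxDegree := by rw [hdeg]; exact hdle
        _ < k := by omega
    obtain ⟨c, hc⟩ : ∃ c, c ∉ D.image φ := by
      by_contra h
      push_neg at h
      rw [Finset.eq_univ_iff_forall.mpr h, Finset.card_univ, Fintype.card_fin] at himg
      omega
    refine ⟨c, Finset.card_pos.mpr ⟨a, ?_⟩⟩
    simp only [hM, mem_filter]
    refine ⟨ha, fun f hf haf hfc => ?_⟩
    exact hc (Finset.mem_image.mpr ⟨f, by simp [hD, haf], hfc⟩)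
  obtain ⟨c₀, hc₀⟩ := hexM
  have hodd : Odd n := by
    have h0 := hcount c₀
    have h1 := hMcard c₀
    have h2 := hMB c₀ hc₀
    rw [Nat.odd_iff]
    omega
  have hIc : ∀ c, 2 * (I c).card = n - 1 := by
    intro c
    have h0 := hcount c
    have h1 := hMcard c
    have h2 := hBcard c
    have h3 := hMB c
    obtain ⟨t, ht⟩ := hodd
    omega
  set S := ∑ c : Fin k, (I c).card with hS
  have hSk : 2 * S = k * (n - 1) := by
    rw [hS, Finset.mul_sum]
    rw [Finset.sum_congr rfl (fun c _ => hIc c)]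
    simp [Finset.card_univ]
  -- the internal edge count
  have hmeq : {f : E | ∀ v ∈ G.ends f, v ∈ X}.ncard = S + 1 := by
    set Int := univ.filter (fun f : E => ∀ v ∈ G.ends f, v ∈ X) with hInt
    have hset : {f : E | ∀ v ∈ G.ends f, v ∈ X} = ↑Int := by
      ext f; simp [hInt]
    rw [hset, Set.ncard_coe_finset]
    have he : e ∈ Int := by simp only [hInt, mem_filter, mem_univ, true_and]; exact hX
    have herase : (Int.erase e).card = S := by
      rw [Finset.card_eq_sum_card_fiberwise (f := φ) (t := univ) (fun f _ => mem_univ _), hS]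
      apply Finset.sum_congr rfl
      intro c _
      congr 1
      ext f
      simp only [hInt, hI, Finset.mem_erase, Finset.mem_filter, mem_univ, true_and]
      tauto
    have h2 := Finset.card_erase_of_mem he
    have h1 : 1 ≤ Int.card := Finset.card_pos.mpr ⟨e, he⟩
    omega
  have hn3 : 3 ≤ n := by
    obtain ⟨a, b, hab, heq⟩ := ends2 e
    have ha : a ∈ X := hX a (heq ▸ Sym2.mem_mk_left a b)
    have hb : b ∈ X := hX b (heq ▸ Sym2.mem_mk_right a b)
    have h2 : 2 ≤ n := by
      rw [hn]
      have : ({a, b} : Finset V) ⊆ X := by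
        intro v hv; simp at hv; rcases hv with rfl | rfl <;> assumption
      calc 2 = ({a, b} : Finset V).card := by rw [Finset.card_insert_of_notMem (by simpa), Finset.card_singleton]
        _ ≤ X.card := Finset.card_le_card this
    obtain ⟨t, ht⟩ := hodd
    omega
  -- rational arithmetic
  refine ⟨hodd, ?_, ?_⟩
  · rw [hmeq]
    have hcast : (2 : ℚ) * S = k * ((n : ℚ) - 1) := by
      have : ((2 * S : ℕ) : ℚ) = ((k * (n - 1) : ℕ) : ℚ) := by rw [hSk]
      push_cast [Nat.cast_sub (by omega : 1 ≤ n)] at this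
      linarith
    rw [eq_div_iff (by
      have : (3 : ℚ) ≤ n := by exact_mod_cast hn3
      linarith)]
    push_cast
    linarith
  · rw [hmeq]
    have hcast : (2 : ℚ) * S = k * ((n : ℚ) - 1) := by
      have : ((2 * S : ℕ) : ℚ) = ((k * (n - 1) : ℕ) : ℚ) := by rw [hSk]
      push_cast [Nat.cast_sub (by omega : 1 ≤ n)] at this
      linarith
    have hnq : (3 : ℚ) ≤ n := by exact_mod_cast hn3
    have hpos : (0 : ℚ) < (n : ℚ) - 1 := by linarith
    symm
    rw [Int.ceil_eq_iff]
    constructor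
    · push_cast
      rw [lt_div_iff₀ hpos]
      push_cast
      nlinarith
    · rw [div_le_iff₀ hpos]
      push_cast
      nlinarith
end

section
/- Let G be a multigraph, e ∈ E(G) with χ'(G−e) ≤ k and χ'(G) = k+1 where k ≥ Δ(G)+1, and suppose there exists a proper k-edge-coloring φ of G−e with respect to which V(G) is elementary. Then χ'(G) = ⌈χ'_f(G)⌉. -/
namespace Multigraph

variable {V E : Type*}

/-!
Let `φ` be a `k`-edge-colouring of `G - e` under which `V(G)` is elementary, and `n = |V(G)|`.
A colour class of `φ` misses at most one vertex, so it is a matching with `⌊n/2⌋` edges, the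
largest size a matching can have; hence `|E(G)| = k⌊n/2⌋ + 1`. Counting edges against the
matchings of a fractional colouring gives `χ'_f(G) ≥ |E(G)|/⌊n/2⌋ > k`, while the
`(k+1)`-edge-colouring of `G` is a fractional colouring of weight `k + 1`.
-/

open Finset

theorem one_lt_card_vertices [Fintype V] (G : Multigraph V E) (e : E) : 1 < Fintype.card V :=
  Sym2.ind (f := fun z => ¬ z.IsDiag → 1 < Fintype.card V)
    (fun x y hxy => Fintype.one_lt_card_iff.mpr ⟨x, y, mt Sym2.mk_isDiag_iff.mpr hxy⟩)
    (G.ends e) (G.not_loop e)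

theorem IsMatching.card_uncovered_add_two_mul_card [Fintype V] {G : Multigraph V E}
    {M : Finset E} [DecidablePred fun v => ∀ f ∈ M, v ∉ G.ends f] (hM : G.IsMatching M) :
    #{v | ∀ f ∈ M, v ∉ G.ends f} + 2 * #M = Fintype.card V := by
  classical
  have hcovered : #(M.biUnion fun f => (G.ends f).toFinset) = 2 * #M := by
    rw [card_biUnion, sum_congr rfl fun f _ => Sym2.card_toFinset_of_not_isDiag _ (G.not_loop f),
      sum_const, smul_eq_mul, mul_comm]
    intro f hf g hg hfg
    exact disjoint_left.mpr fun v hvf hvg =>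
      hM f hf g hg hfg ⟨v, Sym2.mem_toFinset.mp hvf, Sym2.mem_toFinset.mp hvg⟩
  have huncovered : ({v | ∀ f ∈ M, v ∉ G.ends f} : Finset V) =
      univ \ M.biUnion fun f => (G.ends f).toFinset := by
    ext v; simp
  rw [huncovered, ← hcovered, card_sdiff_add_card_eq_card (subset_univ _), card_univ]

theorem IsMatching.two_mul_card_le [Fintype V] {G : Multigraph V E} {M : Finset E}
    (hM : G.IsMatching M) : 2 * #M ≤ Fintype.card V := by
  classical
  have := hM.card_uncovered_add_two_mul_card
  omega

theorem isProperColoring_equivFin [Fintype E] (G : Multigraph V E) :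
    G.IsProperColoring (Fintype.card E) (Fintype.equivFin E) :=
  fun _ _ _ _ hfg hφ => hfg.1 ((Fintype.equivFin E).injective hφ)

theorem exists_isProperColoring_chromaticIndex_s7 [Fintype E] (G : Multigraph V E) :
    ∃ ψ : E → Fin G.chromaticIndex, G.IsProperColoring G.chromaticIndex ψ :=
  Nat.sInf_mem (s := {K | ∃ ψ : E → Fin K, G.IsProperColoring K ψ})
    ⟨_, _, G.isProperColoring_equivFin⟩

section Fractional

variable [Fintype E] [DecidableEq E] {G : Multigraph V E}

/-- Each colour class is given weight one. -/
theorem IsProperColoring.exists_isFracColoring {K : ℕ} {ψ : E → Fin K}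
    (hψ : G.IsProperColoring K ψ) :
    ∃ w, G.IsFracColoring w ∧ ∑ M : Finset E, w M = K := by
  refine ⟨fun M => ∑ c : Fin K, if ({f | ψ f = c} : Finset E) = M then 1 else 0,
    ⟨fun M => sum_nonneg fun c _ => by positivity, ?_, fun f => ?_⟩, ?_⟩
  · intro M hM
    obtain ⟨c, -, hc⟩ := exists_ne_zero_of_sum_ne_zero hM
    obtain rfl : ({f | ψ f = c} : Finset E) = M := by by_contra h; simp [h] at hc
    intro f hf g hg hfg hv
    simp only [mem_filter, mem_univ, true_and] at hf hg
    exact hψ f trivial g trivial ⟨hfg, hv⟩ (hf.trans hg.symm)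
  · calc _ = ∑ c : Fin K, ∑ M : Finset E,
          if ({f | ψ f = c} : Finset E) = M ∧ f ∈ M then (1 : ℝ) else 0 := by
          rw [sum_comm]; exact sum_congr rfl fun M _ => by split_ifs <;> simp [*]
      _ = 1 := by simp [ite_and, eq_comm]
  · rw [sum_comm]; simp

theorem IsFracColoring.card_le_mul_sum {w : Finset E → ℝ} (hw : G.IsFracColoring w) {a : ℕ}
    (ha : ∀ M, G.IsMatching M → #M ≤ a) :
    (Fintype.card E : ℝ) ≤ a * ∑ M : Finset E, w M := by
  calc (Fintype.card E : ℝ) = ∑ f : E, ∑ M : Finset E, if f ∈ M then w M else 0 := by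
        simp [hw.2.2]
    _ = ∑ M : Finset E, w M * #M := by
        rw [sum_comm]; refine sum_congr rfl fun M _ => ?_
        rw [sum_ite_mem, univ_inter, sum_const, nsmul_eq_mul, mul_comm]
    _ ≤ ∑ M : Finset E, w M * a := by
        refine sum_le_sum fun M _ => ?_
        by_cases hM : w M = 0
        · simp [hM]
        · exact mul_le_mul_of_nonneg_left (by exact_mod_cast ha M (hw.2.1 M hM)) (hw.1 M)
    _ = a * ∑ M : Finset E, w M := by rw [← sum_mul, mul_comm]

theorem fracChromaticIndex_le {K : ℕ} {ψ : E → Fin K} (hψ : G.IsProperColoring K ψ) :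
    G.fracChromaticIndex ≤ K := by
  obtain ⟨w, hw, hsum⟩ := hψ.exists_isFracColoring
  refine csInf_le ⟨0, ?_⟩ ⟨w, hw, hsum⟩
  rintro x ⟨w', hw', rfl⟩
  exact sum_nonneg fun M _ => hw'.1 M

theorem card_div_le_fracChromaticIndex {a : ℕ} (ha : 0 < a)
    (hM : ∀ M, G.IsMatching M → #M ≤ a) :
    (Fintype.card E : ℝ) / a ≤ G.fracChromaticIndex := by
  obtain ⟨w, hw, hsum⟩ := G.isProperColoring_equivFin.exists_isFracColoring
  refine le_csInf ⟨_, w, hw, rfl⟩ ?_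
  rintro x ⟨w', hw', rfl⟩
  rw [div_le_iff₀ (by exact_mod_cast ha), mul_comm]
  exact hw'.card_le_mul_sum hM

end Fractional

section ColorClass

variable [Fintype E] [DecidableEq E] {G : Multigraph V E} {e : E} {k : ℕ} {φ : E → Fin k}

def colorClassOff (e : E) (φ : E → Fin k) (c : Fin k) : Finset E := {f | f ≠ e ∧ φ f = c}

theorem IsProperColoringOff.isMatching_colorClassOff (hφ : G.IsProperColoringOff e k φ)
    (c : Fin k) : G.IsMatching (colorClassOff e φ c) := by
  intro f hf g hg hfg hv
  simp only [colorClassOff, mem_filter, mem_univ, true_and] at hf hg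
  exact hφ f hf.1 g hg.1 ⟨hfg, hv⟩ (hf.2.trans hg.2.symm)

theorem missingAt_iff_forall_colorClassOff {v : V} {c : Fin k} :
    G.MissingAt e φ v c ↔ ∀ f ∈ colorClassOff e φ c, v ∉ G.ends f := by
  simp only [MissingAt, colorClassOff, mem_filter, mem_univ, true_and, and_imp]
  exact forall_congr' fun f => by tauto

theorem card_eq_sum_card_colorClassOff (e : E) (φ : E → Fin k) :
    Fintype.card E = ∑ c, #(colorClassOff e φ c) + 1 := by
  rw [← card_univ, ← card_erase_add_one (mem_univ e),
    card_eq_sum_card_fiberwise fun f _ => mem_univ (φ f)]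
  simp only [colorClassOff, filter_filter, ← filter_ne']

/-- By elementarity a colour class of `φ` misses at most one vertex. -/
theorem IsElementary.card_colorClassOff [Fintype V] (hel : G.IsElementary e φ Set.univ)
    (hφ : G.IsProperColoringOff e k φ) (c : Fin k) :
    #(colorClassOff e φ c) = Fintype.card V / 2 := by
  classical
  have hcount := (hφ.isMatching_colorClassOff c).card_uncovered_add_two_mul_card
  have hmissing : #{v | ∀ f ∈ colorClassOff e φ c, v ∉ G.ends f} ≤ 1 := by
    refine card_le_one.mpr fun x hx y hy => by_contra fun hxy => ?_
    simp only [mem_filter, mem_univ, true_and, ← missingAt_iff_forall_colorClassOff] at hx hy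
    exact hel x trivial y trivial hxy c hx hy
  omega

end ColorClass

end Multigraph

open Multigraph in
theorem elementary_whole_implies_goldberg_general
    {V E : Type*} [Fintype V] [Fintype E] [DecidableEq E] (G : Multigraph V E)
    (e : E) (k : ℕ)
    (hchi : G.chromaticIndex = k + 1)
    (hel : ∃ φ : E → Fin k, G.IsProperColoringOff e k φ ∧
      G.IsElementary e φ (Set.univ : Set V)) :
    (G.chromaticIndex : ℤ) = ⌈G.fracChromaticIndex⌉ := by
  obtain ⟨φ, hφ, hφel⟩ := hel
  set a := Fintype.card V / 2
  have ha : 0 < a := by have := G.one_lt_card_vertices e; omega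
  have hedges : Fintype.card E = k * a + 1 := by
    simp [card_eq_sum_card_colorClassOff e φ, hφel.card_colorClassOff hφ, a]
  have hlower : (k : ℝ) < G.fracChromaticIndex := by
    have hmatch : ∀ M, G.IsMatching M → M.card ≤ a := fun M hM => by
      have := hM.two_mul_card_le; omega
    calc (k : ℝ) < (k * a + 1 : ℕ) / a := by
          rw [lt_div_iff₀ (by exact_mod_cast ha)]; push_cast; linarith
      _ = Fintype.card E / a := by rw [hedges]
      _ ≤ G.fracChromaticIndex := card_div_le_fracChromaticIndex ha hmatch
  obtain ⟨ψ, hψ⟩ := G.exists_isProperColoring_chromaticIndex_s7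
  have hupper : G.fracChromaticIndex ≤ k + 1 := by
    simpa [hchi] using fracChromaticIndex_le hψ
  rw [hchi, eq_comm, Int.ceil_eq_iff]
  push_cast
  constructor <;> linarith

open Multigraph in
/-- if `χ'(G - e) ≤ k`, `χ'(G) = k + 1 ≥ Δ + 2`, and `V(G)` is elementary
w.r.t. some proper `k`-edge-coloring of `G - e`, then `χ'(G) = ⌈χ'_f(G)⌉`. -/
theorem elementary_whole_implies_goldberg
    {V E : Type*} [Fintype V] [Fintype E] [DecidableEq E] (G : Multigraph V E)
    (e : E) (k : ℕ)
    (hke : G.chromaticIndexOn ({e}ᶜ : Set E) ≤ k)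
    (hchi : G.chromaticIndex = k + 1)
    (hk : G.maxDegree + 1 ≤ k)
    (hel : ∃ φ : E → Fin k, G.IsProperColoringOff e k φ ∧
      G.IsElementary e φ (Set.univ : Set V)) :
    (G.chromaticIndex : ℤ) = ⌈G.fracChromaticIndex⌉ :=
  elementary_whole_implies_goldberg_general G e k hchi hel
end

section
/- Let G be a k-critical non-elementary multigraph with k ≥ Δ+1, and suppose T is an elementary vertex set obtained from the construction with |V(T)| ≥ (k−Δ+1)·|V(T₀)| + 1 where |V(T₀)| ≥ 2(k−Δ)+1. Then k ≥ (k−Δ)·(2(k−Δ)² + 3(k−Δ) + 2) + 2, and consequently k < Δ + (Δ/2)^{1/3}. -/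
open Multigraph in
/-- in a `k`-critical non-elementary multigraph with `k ≥ Δ + 1`, an
elementary vertex set `T` with `|T| ≥ (k-Δ+1)|T₀| + 1` where `|T₀| ≥ 2(k-Δ)+1` yields
`k ≥ (k-Δ)(2(k-Δ)² + 3(k-Δ) + 2) + 2`, hence `k < Δ + (Δ/2)^{1/3}`. -/
theorem elementary_set_cube_root_bound
    {V E : Type*} [Fintype V] [Fintype E] [DecidableEq E] (G : Multigraph V E)
    (k : ℕ) (hk : G.maxDegree + 1 ≤ k)
    (hcrit : G.chromaticIndex = k + 1 ∧
      ∀ F : Set E, F ≠ Set.univ → G.chromaticIndexOn F < G.chromaticIndex)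
    (hne : ¬ ((G.chromaticIndex : ℤ) = ⌈G.fracChromaticIndex⌉))
    (e : E) (φ : E → Fin k) (hφ : G.IsProperColoringOff e k φ)
    (T : Finset V) (hT : ∀ v ∈ G.ends e, v ∈ T)
    (helem : G.IsElementary e φ (↑T : Set V))
    (n₀ : ℕ) (hn₀ : 2 * (k - G.maxDegree) + 1 ≤ n₀)
    (hTcard : (k - G.maxDegree + 1) * n₀ + 1 ≤ T.card) :
    (k - G.maxDegree) * (2 * (k - G.maxDegree) ^ 2 + 3 * (k - G.maxDegree) + 2) + 2 ≤ k ∧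
    (k : ℝ) < (G.maxDegree : ℝ) + ((G.maxDegree : ℝ) / 2) ^ ((1 : ℝ) / 3) := by

  classical
  set Δ := G.maxDegree with hΔdef
  set t := k - Δ with htdef
  -- endpoints of e
  obtain ⟨⟨u, w⟩, hp⟩ := Quot.exists_rep (G.ends e)
  have huw : G.ends e = s(u, w) := hp.symm
  have hne_uw : u ≠ w := by
    intro h
    exact G.not_loop e (by rw [huw, h]; exact Sym2.mk_isDiag_iff.mpr rfl)
  have hu : u ∈ G.ends e := by rw [huw]; exact Sym2.mem_mk_left u w
  have hw : w ∈ G.ends e := by rw [huw]; exact Sym2.mem_mk_right u w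
  have huT : u ∈ T := hT u hu
  have hwT : w ∈ T := hT w hw
  have hdeg : ∀ v, G.degree v ≤ Δ := fun v =>
    le_csSup (Set.Finite.bddAbove (Set.finite_range _)) ⟨v, rfl⟩
  set M : V → Finset (Fin k) := fun v => Finset.univ.filter (fun c => G.MissingAt e φ v c)
    with hM
  -- key pointwise bound
  have key : ∀ v ∈ T, t + (if v ∈ G.ends e then 1 else 0) ≤ (M v).card := by
    intro v _
    set Dv := Finset.univ.filter (fun f => v ∈ G.ends f) with hDv
    set Av := Finset.univ.filter (fun f => v ∈ G.ends f ∧ f ≠ e) with hAv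
    have hdegv : G.degree v = Dv.card := by
      rw [Multigraph.degree, Set.ncard_eq_toFinset_card']
      congr 1
      ext f
      simp [hDv]
    have hsub : Finset.univ \ Av.image φ ⊆ M v := by
      intro c hc
      simp only [Finset.mem_sdiff, Finset.mem_image, Finset.mem_univ, true_and] at hc
      simp only [hM, Finset.mem_filter, Finset.mem_univ, true_and]
      intro f hf hvf hφf
      exact hc ⟨f, by simp [hAv, hvf, hf], hφf⟩
    have h1 : k - (Av.image φ).card ≤ (M v).card := by
      calc k - (Av.image φ).card = (Finset.univ \ Av.image φ).card := by
            rw [Finset.card_sdiff_of_subset (Finset.subset_univ _), Finset.card_univ, Fintype.card_fin]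
        _ ≤ (M v).card := Finset.card_le_card hsub
    have h2 : (Av.image φ).card ≤ Av.card := Finset.card_image_le
    have hdv := hdeg v
    by_cases hve : v ∈ G.ends e
    · have heD : e ∈ Dv := by simp [hDv, hve]
      have hsub2 : Av ⊆ Dv.erase e := by
        intro f hf
        simp only [hAv, Finset.mem_filter, Finset.mem_univ, true_and] at hf
        exact Finset.mem_erase.mpr ⟨hf.2, by simp [hDv, hf.1]⟩
      have h3 := Finset.card_le_card hsub2
      rw [Finset.card_erase_of_mem heD] at h3
      have h4 : 1 ≤ Dv.card := Finset.card_pos.mpr ⟨e, heD⟩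
      simp only [hve, if_true]
      omega
    · have hsub2 : Av ⊆ Dv := by
        intro f hf
        simp only [hAv, Finset.mem_filter, Finset.mem_univ, true_and] at hf
        simp [hDv, hf.1]
      have h3 := Finset.card_le_card hsub2
      simp only [hve, if_false]
      omega
  -- disjointness of missing color sets
  have hdisj : ∀ x ∈ T, ∀ y ∈ T, x ≠ y → Disjoint (M x) (M y) := by
    intro x hx y hy hxy
    rw [Finset.disjoint_left]
    intro c hcx hcy
    simp only [hM, Finset.mem_filter, Finset.mem_univ, true_and] at hcx hcy
    exact helem x (Finset.mem_coe.mpr hx) y (Finset.mem_coe.mpr hy) hxy c hcx hcy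
  have hsum_le : ∑ v ∈ T, (M v).card ≤ k := by
    rw [← Finset.card_biUnion hdisj]
    calc (T.biUnion M).card ≤ (Finset.univ : Finset (Fin k)).card := Finset.card_le_univ _
      _ = k := by simp
  -- lower bound on the sum
  have hlow : t * T.card + 2 ≤ ∑ v ∈ T, (M v).card := by
    have hs : ∑ v ∈ T, (t + (if v ∈ G.ends e then 1 else 0)) ≤ ∑ v ∈ T, (M v).card :=
      Finset.sum_le_sum key
    rw [Finset.sum_add_distrib, Finset.sum_const, smul_eq_mul, Finset.sum_boole] at hs
    have hfilset : T.filter (fun v => v ∈ G.ends e) = {u, w} := by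
      ext x
      simp only [Finset.mem_filter, Finset.mem_insert, Finset.mem_singleton]
      constructor
      · rintro ⟨-, hx⟩
        rw [huw] at hx
        exact Sym2.mem_iff.mp hx
      · rintro (rfl | rfl)
        exacts [⟨huT, hu⟩, ⟨hwT, hw⟩]
    have hfil : (T.filter (fun v => v ∈ G.ends e)).card = 2 := by
      rw [hfilset, Finset.card_insert_of_notMem (by simpa using hne_uw),
        Finset.card_singleton]
    rw [hfil] at hs
    calc t * T.card + 2 = T.card * t + 2 := by ring
      _ ≤ ∑ v ∈ T, (M v).card := by push_cast at hs ⊢; omega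
  have hk2 : t * T.card + 2 ≤ k := hlow.trans hsum_le
  have hT2 : (t + 1) * (2 * t + 1) + 1 ≤ T.card := by
    have h5 := Nat.mul_le_mul_left (t + 1) hn₀
    omega
  have hpart1 : t * (2 * t ^ 2 + 3 * t + 2) + 2 ≤ k := by
    have h6 := Nat.mul_le_mul_left t hT2
    calc t * (2 * t ^ 2 + 3 * t + 2) + 2 = t * ((t + 1) * (2 * t + 1) + 1) + 2 := by ring
      _ ≤ t * T.card + 2 := by omega
      _ ≤ k := hk2
  refine ⟨hpart1, ?_⟩
  have hkeq : k = Δ + t := by omega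
  have hΔt : 2 * t ^ 3 < Δ := by nlinarith [hpart1, hkeq, sq_nonneg t]
  have h0 : (0 : ℝ) ≤ (t : ℝ) := Nat.cast_nonneg t
  have hcube : ((t : ℝ)) ^ (3 : ℕ) < (Δ : ℝ) / 2 := by
    have hc := (Nat.cast_lt (α := ℝ)).mpr hΔt
    push_cast at hc
    linarith
  have htlt : (t : ℝ) < ((Δ : ℝ) / 2) ^ ((1 : ℝ) / 3) := by
    have h1 : (t : ℝ) = (((t : ℝ)) ^ (3 : ℕ)) ^ ((1 : ℝ) / 3) := by
      rw [← Real.rpow_natCast (t : ℝ) 3, ← Real.rpow_mul h0]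
      norm_num
    rw [h1]
    exact Real.rpow_lt_rpow (by positivity) hcube (by norm_num)
  have hkr : (k : ℝ) = (Δ : ℝ) + (t : ℝ) := by rw [hkeq]; push_cast; ring
  linarith
end

section
/- Let (G,e,φ) be a k-triple with k ≥ Δ+1, let T ∈ 𝒯_e be an e-maximal Tashkinov tree, let γ be a free color of T missing at the unique vertex u ∈ V(T) with γ ∈ φ̄(u), and let δ be a color not missing at any vertex of V(T). Then the (γ,δ)-chain P_u(γ,δ,φ) containing u contains every edge of ∂(V(T)) colored δ. -/
namespace Multigraph

section Aux

variable {V E : Type*} (G : Multigraph V E) (e : E) {k : ℕ} (φ : E → Fin k)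
  (γ δ : Fin k) (R : V → Prop)

/-- The edge `g` lies on the `(γ,δ)`-chain determined by the reachability predicate `R`. -/
def InChain (g : E) : Prop :=
  g ≠ e ∧ (φ g = γ ∨ φ g = δ) ∧ ∃ x ∈ G.ends g, R x

open Classical in
/-- The coloring obtained from `φ` by swapping `γ` and `δ` on the chain. -/
noncomputable def swapC : E → Fin k :=
  fun g => if G.InChain e φ γ δ R g then (if φ g = γ then δ else γ) else φ g

variable {G e φ γ δ R}

lemma swapC_of_not {g : E} (hg : ¬ G.InChain e φ γ δ R g) :
    G.swapC e φ γ δ R g = φ g := by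
  simp [swapC, hg]

lemma swapC_of_mem {g : E} (hg : G.InChain e φ γ δ R g) :
    G.swapC e φ γ δ R g = if φ g = γ then δ else γ := by
  simp [swapC, hg]

lemma swapC_mem {g : E} (hg : G.InChain e φ γ δ R g) :
    G.swapC e φ γ δ R g = γ ∨ G.swapC e φ γ δ R g = δ := by
  rw [swapC_of_mem hg]
  split
  · exact Or.inr rfl
  · exact Or.inl rfl

lemma missing_swapC {w : V} {c : Fin k} (hcγ : c ≠ γ) (hcδ : c ≠ δ)
    (hm : G.MissingAt e φ w c) : G.MissingAt e (G.swapC e φ γ δ R) w c := by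
  intro g hge hwg
  by_cases hg : G.InChain e φ γ δ R g
  · rcases swapC_mem hg with h | h <;> rw [h]
    · exact fun h' => hcγ h'.symm
    · exact fun h' => hcδ h'.symm
  · rw [swapC_of_not hg]; exact hm g hge hwg

lemma swapC_proper (hφ : G.IsProperColoringOff e k φ) (hγδ : γ ≠ δ)
    (hRc : ∀ g, G.InChain e φ γ δ R g → ∀ b ∈ G.ends g, R b) :
    G.IsProperColoringOff e k (G.swapC e φ γ δ R) := by
  intro a ha b hb hadj
  have hbne : b ≠ e := hb
  obtain ⟨hab, w, hwa, hwb⟩ := hadj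
  have hane : a ≠ e := ha
  have hne := hφ a ha b hb ⟨hab, w, hwa, hwb⟩
  by_cases hca : G.InChain e φ γ δ R a <;> by_cases hcb : G.InChain e φ γ δ R b
  · rw [swapC_of_mem hca, swapC_of_mem hcb]
    rcases hca.2.1 with h1 | h1 <;> rcases hcb.2.1 with h2 | h2
    · exact absurd (h1.trans h2.symm) hne
    · rw [if_pos h1, if_neg (by rw [h2]; exact hγδ.symm)]
      exact hγδ.symm
    · rw [if_neg (by rw [h1]; exact hγδ.symm), if_pos h2]
      exact hγδ
    · exact absurd (h1.trans h2.symm) hne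
  · have hbc : φ b ≠ γ ∧ φ b ≠ δ := by
      constructor <;> intro h <;>
        exact hcb ⟨hbne, by rw [h]; simp, ⟨w, hwb, hRc a hca w hwa⟩⟩
    rw [swapC_of_not hcb]
    rcases swapC_mem hca with h | h <;> rw [h]
    · exact fun h' => hbc.1 h'.symm
    · exact fun h' => hbc.2 h'.symm
  · have hac : φ a ≠ γ ∧ φ a ≠ δ := by
      constructor <;> intro h <;>
        exact hca ⟨hane, by rw [h]; simp, ⟨w, hwa, hRc b hcb w hwb⟩⟩
    rw [swapC_of_not hca]
    rcases swapC_mem hcb with h | h <;> rw [h]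
    · exact hac.1
    · exact hac.2
  · rw [swapC_of_not hca, swapC_of_not hcb]
    exact hne

lemma TSet_mono {t : ℕ → E} {i j : ℕ} (h : i ≤ j) : G.TSet t i ⊆ G.TSet t j := by
  rintro v ⟨l, hl, hv⟩
  exact ⟨l, lt_of_lt_of_le hl h, hv⟩

lemma TSet_update {t : ℕ → E} {p i : ℕ} (h : i ≤ p) (f : E) :
    G.TSet (Function.update t p f) i = G.TSet t i := by
  ext v
  constructor <;> rintro ⟨j, hj, hv⟩ <;> refine ⟨j, hj, ?_⟩
  · rwa [Function.update_of_ne (Nat.ne_of_lt (lt_of_lt_of_le hj h))] at hv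
  · rwa [Function.update_of_ne (Nat.ne_of_lt (lt_of_lt_of_le hj h))]

end Aux

end Multigraph

open Multigraph in
/-- for an `e`-maximal Tashkinov tree `T`, a free color `γ` missing at
`u ∈ V(T)` and a color `δ` not missing at any vertex of `V(T)`, the `(γ, δ)`-chain
containing `u` contains every boundary edge of `V(T)` colored `δ`. -/
theorem chain_contains_all_delta_boundary
    {V E : Type*} [Fintype V] [Fintype E] (G : Multigraph V E)
    (e : E) (k : ℕ) (hk : G.maxDegree + 1 ≤ k)
    (hchi : G.chromaticIndex = k + 1)
    (φ : E → Fin k) (hφ : G.IsProperColoringOff e k φ)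
    (p : ℕ) (t : ℕ → E) (hT : G.IsTashkinov e φ p t)
    (hmax : G.IsEMaximal e k p t)
    (γ : Fin k) (hγ : γ ∈ G.freeColors e φ p t)
    (u : V) (hu : u ∈ G.TSet t p) (huγ : G.MissingAt e φ u γ)
    (δ : Fin k) (hδ : ∀ w ∈ G.TSet t p, ¬ G.MissingAt e φ w δ) :
    ∀ f, f ≠ e → G.IsBoundaryEdge (G.TSet t p) f → φ f = δ →
      ∀ v ∈ G.ends f,
        Relation.ReflTransGen
          (fun x y : V => ∃ g, g ≠ e ∧ (φ g = γ ∨ φ g = δ) ∧ G.ends g = s(x, y))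
          u v := by
  classical
  intro f hfe hfB hfδ v hv
  by_contra hvR
  have hγδ : γ ≠ δ := fun h => hδ u hu (h ▸ huγ)
  set R : V → Prop := fun x =>
    Relation.ReflTransGen
      (fun x y : V => ∃ g, g ≠ e ∧ (φ g = γ ∨ φ g = δ) ∧ G.ends g = s(x, y)) u x
    with hRdef
  have hvR' : ¬ R v := hvR
  have hRc : ∀ g, G.InChain e φ γ δ R g → ∀ b ∈ G.ends g, R b := by
    rintro g ⟨hge, hgc, x, hx, hRx⟩ b hb
    by_cases hxb : x = b
    · exact hxb ▸ hRx
    · exact Relation.ReflTransGen.tail hRx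
        ⟨g, hge, hgc, (Sym2.mem_and_mem_iff hxb).1 ⟨hx, hb⟩⟩
  set φ' := G.swapC e φ γ δ R with hφ'def
  obtain ⟨hp, ht0, hTi⟩ := hT
  have htree_sub : ∀ i < p, ∀ w ∈ G.ends (t i), w ∈ G.TSet t p :=
    fun i hi w hw => ⟨i, hi, hw⟩
  have hcol : ∀ i, 1 ≤ i → i < p → φ (t i) ≠ γ ∧ φ (t i) ≠ δ := by
    intro i h1 h2
    obtain ⟨hne, hbd, w, hw, hmiss⟩ := hTi i h1 h2
    refine ⟨fun h => hγ.2 ⟨i, h2, hne, h⟩, fun h => ?_⟩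
    exact hδ w (TSet_mono h2.le hw) (h ▸ hmiss)
  have hnotC : ∀ i, 1 ≤ i → i < p → ¬ G.InChain e φ γ δ R (t i) := by
    intro i h1 h2 hC
    rcases hC.2.1 with h | h
    · exact (hcol i h1 h2).1 h
    · exact (hcol i h1 h2).2 h
  have hfC : ¬ G.InChain e φ γ δ R f := fun hC => hvR' (hRc f hC v hv)
  have hφ'f : φ' f = δ := by rw [hφ'def, swapC_of_not hfC, hfδ]
  have huδ' : G.MissingAt e φ' u δ := by
    intro g hge hug
    by_cases hg : G.InChain e φ γ δ R g
    · rw [hφ'def, swapC_of_mem hg, if_neg (huγ g hge hug)]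
      exact hγδ
    · rw [hφ'def, swapC_of_not hg]
      intro h
      exact hg ⟨hge, Or.inr h, u, hug, Relation.ReflTransGen.refl⟩
  have hφ'proper : G.IsProperColoringOff e k φ' := swapC_proper hφ hγδ hRc
  refine hmax ⟨φ', p + 1, Function.update t p f, hφ'proper, ?_, ?_⟩
  · refine ⟨Nat.succ_pos p, ?_, ?_⟩
    · rw [Function.update_of_ne hp.ne f t]
      exact ht0
    · intro i h1 hip1
      by_cases hip : i < p
      · have hieq : Function.update t p f i = t i := Function.update_of_ne hip.ne f t
        obtain ⟨hne, hbd, w, hw, hmiss⟩ := hTi i h1 hip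
        rw [hieq, TSet_update hip.le]
        have hcc : φ' (t i) = φ (t i) := by
          rw [hφ'def, swapC_of_not (hnotC i h1 hip)]
        rw [hcc]
        exact ⟨hne, hbd, w, hw,
          missing_swapC (hcol i h1 hip).1 (hcol i h1 hip).2 hmiss⟩
      · have hip' : i = p := by omega
        subst hip'
        rw [Function.update_self, TSet_update (le_refl _)]
        exact ⟨hfe, hfB, u, hu, by rw [hφ'f]; exact huδ'⟩
  · rw [Set.ssubset_def]
    constructor
    · rintro g ⟨i, hi, hgi⟩
      exact ⟨i, Nat.lt_succ_of_lt hi, by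
        rw [Function.update_of_ne hi.ne]; exact hgi⟩
    · intro hsub
      obtain ⟨i, hi, hti⟩ :=
        hsub ⟨p, Nat.lt_succ_self p, Function.update_self p f t⟩
      obtain ⟨w, hwf, hwout⟩ := hfB.2
      rw [← hti] at hwf
      exact hwout (htree_sub i hi w hwf)
end
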